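/- arXiv:1906.08656 — 7 statements merged into one kernel-verified Lean document; each statement's English description precedes it below -/
import Mathlib

section
/- Distribution-independent regret bound for ELIM: for every number of arms K ≥ 1, every horizon T ≥ 1, and every probability distribution ν on [0,1]^K, the pseudo-regret of the ELIM algorithm run with horizon T satisfies R(T) = E[∑_{t=1}^T (μ_{i*} − μ_{I_t})] ≤ 4·√(2T·ln(K·T²)) + 3. -/
open MeasureTheory Finset

/-- Empirical mean of arm `i` after `t` rounds (rounds are 0-indexed: `X s` is the
reward vector of round `s + 1`). -/
noncomputable def empMean {K : ℕ} (X : ℕ → Fin K → ℝ) (t : ℕ) (i : Fin K) : ℝ :=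
  (∑ s ∈ Finset.range t, X s i) / t

/-- The confidence radius `ρ_t = √(ln(K T²) / (2 (t-1)))`, with `ρ_1 = ∞`. -/
noncomputable def elimRho (K T t : ℕ) : EReal :=
  if t ≤ 1 then ⊤
  else ((Real.sqrt (Real.log ((K : ℝ) * (T : ℝ) ^ 2) / (2 * ((t : ℝ) - 1)))) : ℝ)

open scoped Classical in
/-- The set `S_t` of surviving arms of the ELIM algorithm with `K` arms and horizon `T`:
`S_0 = [K]`, and `S_t` keeps exactly those arms of `S_{t-1}` whose empirical mean after
`t - 1` rounds is within `2 ρ_t` of the best empirical mean over `S_{t-1}`. -/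
noncomputable def elimS (K T : ℕ) (X : ℕ → Fin K → ℝ) : ℕ → Finset (Fin K)
  | 0 => Finset.univ
  | t + 1 =>
      (elimS K T X t).filter fun i =>
        ∀ j ∈ elimS K T X t,
          ((empMean X t j - empMean X t i : ℝ) : EReal) ≤ 2 * elimRho K T (t + 1)

/-- The arm `I_t = min S_t` played by ELIM at round `t`. -/
noncomputable def elimI (K T : ℕ) [NeZero K] (X : ℕ → Fin K → ℝ) (t : ℕ) : Fin K :=
  if h : (elimS K T X t).Nonempty then (elimS K T X t).min' h else 0

/-- Extend a reward matrix on `Fin T` rounds to all of `ℕ` (by junk values `0`). -/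
noncomputable def extendRewards {K : ℕ} (T : ℕ) (ω : Fin T → Fin K → ℝ) :
    ℕ → Fin K → ℝ :=
  fun s => if h : s < T then ω ⟨s, h⟩ else 0

/-!
On the event that every empirical mean after `τ` rounds (`1 ≤ τ < T`) lies within
`ρ_{τ+1} = √(ln(K T²) / (2 τ))` of its true mean, the best arm is never eliminated and every arm
that survives into round `t ≥ 2` has gap at most `4 ρ_t`; summing, the regret is at most
`1 + 4 ∑_{τ < T} ρ_{τ+1} ≤ 1 + 4 √(2 T ln(K T²))`. By Hoeffding's inequality each of the
`K (T - 1)` deviations has probability at most `2 / (K T²)`, so the event fails with probability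
at most `2 / T`, and there the regret is at most `T`.
-/

open ProbabilityTheory

section Hoeffding

variable {ι Ω : Type*} [Fintype ι] [MeasurableSpace Ω] {ν : Measure Ω} [IsProbabilityMeasure ν]
  {f : Ω → ℝ} {a b : ℝ}

lemma hasSubgaussianMGF_sum_pi (hf : AEMeasurable f ν) (hfab : ∀ᵐ x ∂ν, f x ∈ Set.Icc a b)
    (S : Finset ι) :
    HasSubgaussianMGF (fun ω : ι → Ω ↦ ∑ s ∈ S, (f (ω s) - ν[f])) (#S * (‖b - a‖₊ / 2) ^ 2)
      (Measure.pi fun _ ↦ ν) := by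
  have hindep : iIndepFun (fun s (ω : ι → Ω) ↦ f (ω s) - ν[f]) (Measure.pi fun _ ↦ ν) :=
    iIndepFun_pi (X := fun _ x ↦ f x - ν[f]) fun _ ↦ hf.sub_const _
  have hcoord (s : ι) : HasSubgaussianMGF (fun ω : ι → Ω ↦ f (ω s) - ν[f])
      ((‖b - a‖₊ / 2) ^ 2) (Measure.pi fun _ ↦ ν) := by
    have hmp := measurePreserving_eval (fun _ : ι ↦ ν) s
    refine HasSubgaussianMGF.of_map (X := fun x ↦ f x - ν[f]) hmp.measurable.aemeasurable ?_
    rw [hmp.map_eq]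
    exact hasSubgaussianMGF_of_mem_Icc hf hfab
  simpa using HasSubgaussianMGF.sum_of_iIndepFun hindep (s := S) fun s _ ↦ hcoord s

lemma measureReal_abs_sum_sub_integral_ge_le (hf : AEMeasurable f ν)
    (hfab : ∀ᵐ x ∂ν, f x ∈ Set.Icc a b) (S : Finset ι) {ε : ℝ} (hε : 0 ≤ ε) :
    (Measure.pi fun _ ↦ ν).real {ω | ε ≤ |∑ s ∈ S, (f (ω s) - ν[f])|}
      ≤ 2 * Real.exp (-2 * ε ^ 2 / (#S * (b - a) ^ 2)) := by
  have h := hasSubgaussianMGF_sum_pi hf hfab S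
  have htail : ∀ X : (ι → Ω) → ℝ,
      HasSubgaussianMGF X (#S * (‖b - a‖₊ / 2) ^ 2) (Measure.pi fun _ ↦ ν) →
      (Measure.pi fun _ ↦ ν).real {ω | ε ≤ X ω} ≤ Real.exp (-2 * ε ^ 2 / (#S * (b - a) ^ 2)) := by
    intro X hX
    refine (hX.measure_ge_le hε).trans_eq ?_
    congr 1
    push_cast
    rw [Real.norm_eq_abs, div_pow, sq_abs, show 2 * (#S * ((b - a) ^ 2 / 2 ^ 2) : ℝ)
      = #S * (b - a) ^ 2 / 2 by ring, div_div_eq_mul_div]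
    ring
  calc _ ≤ (Measure.pi fun _ ↦ ν).real ({ω | ε ≤ ∑ s ∈ S, (f (ω s) - ν[f])} ∪
        {ω | ε ≤ -∑ s ∈ S, (f (ω s) - ν[f])}) := by
        refine measureReal_mono fun ω (hω : ε ≤ |_|) ↦ ?_
        exact (le_abs'.1 hω).symm.imp_right fun h ↦ le_neg.2 h
    _ ≤ _ := by
        have hneg := htail _ h.neg
        simp only [Pi.neg_apply] at hneg
        linarith [measureReal_union_le (μ := Measure.pi fun _ ↦ ν)
          {ω | ε ≤ ∑ s ∈ S, (f (ω s) - ν[f])} {ω | ε ≤ -∑ s ∈ S, (f (ω s) - ν[f])}, htail _ h]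

end Hoeffding

lemma integral_le_mul_measureReal_add_mul_measureReal_compl {Ω : Type*} [MeasurableSpace Ω]
    {P : Measure Ω} [IsFiniteMeasure P] {f : Ω → ℝ} {G : Set Ω} (hG : MeasurableSet G)
    {B C : ℝ} (hf : 0 ≤ᵐ[P] f) (hfG : ∀ ω ∈ G, f ω ≤ C) (hfB : ∀ ω, f ω ≤ B) :
    ∫ ω, f ω ∂P ≤ C * P.real G + B * P.real Gᶜ := by
  classical
  have hg : Integrable (G.piecewise (fun _ ↦ C) fun _ ↦ B) P :=
    Integrable.piecewise hG (integrable_const C).integrableOn (integrable_const B).integrableOn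
  calc ∫ ω, f ω ∂P ≤ ∫ ω, G.piecewise (fun _ ↦ C) (fun _ ↦ B) ω ∂P := by
        refine integral_mono_of_nonneg hf hg (ae_of_all _ fun ω ↦ ?_)
        by_cases hω : ω ∈ G
        · simpa [hω] using hfG ω hω
        · simpa [hω] using hfB ω
    _ = C * P.real G + B * P.real Gᶜ := by
        rw [integral_piecewise hG (integrable_const C).integrableOn
          (integrable_const B).integrableOn, setIntegral_const, setIntegral_const,
          smul_eq_mul, smul_eq_mul, mul_comm, mul_comm (P.real Gᶜ)]

lemma sum_Icc_one_div_sqrt_le (n : ℕ) : ∑ s ∈ Icc 1 n, 1 / √s ≤ 2 * √n := by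
  induction n with
  | zero => simp
  | succ n ih =>
    rw [sum_Icc_succ_top (by omega)]
    have hn : 0 < √((n : ℝ) + 1) := Real.sqrt_pos.2 (by positivity)
    -- `1 / √(n+1) ≤ 2 (√(n+1) - √n)` because `(√(n+1) - √n) (√(n+1) + √n) = 1`
    have hstep : 1 / √((n : ℝ) + 1) ≤ 2 * √((n : ℝ) + 1) - 2 * √(n : ℝ) := by
      rw [div_le_iff₀ hn]
      nlinarith [Real.sq_sqrt (by positivity : (0 : ℝ) ≤ n),
        Real.sq_sqrt (by positivity : (0 : ℝ) ≤ n + 1)]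
    push_cast
    linarith

noncomputable def elimRadius (K T τ : ℕ) : ℝ :=
  √(Real.log ((K : ℝ) * (T : ℝ) ^ 2) / (2 * τ))

lemma elimRho_succ {K T τ : ℕ} (hτ : τ ≠ 0) :
    elimRho K T (τ + 1) = elimRadius K T τ := by
  rw [elimRho, if_neg (by omega), elimRadius]
  push_cast
  ring_nf

lemma two_mul_elimRho_succ {K T τ : ℕ} (hτ : τ ≠ 0) :
    2 * elimRho K T (τ + 1) = ((2 * elimRadius K T τ : ℝ) : EReal) := by
  rw [elimRho_succ hτ, EReal.coe_mul]
  rfl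

lemma sum_elimRadius_le (K T n : ℕ) :
    ∑ τ ∈ Icc 1 n, elimRadius K T τ ≤ √(2 * n * Real.log ((K : ℝ) * (T : ℝ) ^ 2)) := by
  set L := Real.log ((K : ℝ) * (T : ℝ) ^ 2)
  have hrad (τ : ℕ) : elimRadius K T τ = √(L / 2) * (1 / √τ) := by
    rw [elimRadius, ← div_div, Real.sqrt_div' _ (Nat.cast_nonneg τ), mul_one_div]
  calc ∑ τ ∈ Icc 1 n, elimRadius K T τ = √(L / 2) * ∑ τ ∈ Icc 1 n, 1 / √τ := by
        simp only [hrad, mul_sum]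
    _ ≤ √(L / 2) * (2 * √n) := by gcongr; exact sum_Icc_one_div_sqrt_le n
    _ = √(2 * n * L) := by
        rw [show 2 * (n : ℝ) * L = L / 2 * (2 ^ 2 * n) by ring, Real.sqrt_mul' _ (by positivity),
          Real.sqrt_mul' _ (Nat.cast_nonneg n), Real.sqrt_sq zero_le_two]

def EmpMeansNear (K T : ℕ) (X : ℕ → Fin K → ℝ) (μ : Fin K → ℝ) : Prop :=
  ∀ τ, 1 ≤ τ → τ + 1 ≤ T → ∀ i, |empMean X τ i - μ i| ≤ elimRadius K T τ

section Elimination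

variable {K T : ℕ} {X : ℕ → Fin K → ℝ} {μ : Fin K → ℝ} {iStar : Fin K}

lemma mem_elimS_of_empMeansNear (hstar : ∀ i, μ i ≤ μ iStar) (hX : EmpMeansNear K T X μ)
    {t : ℕ} (ht : t ≤ T) : iStar ∈ elimS K T X t := by
  induction t with
  | zero => exact mem_univ _
  | succ τ ih =>
    refine mem_filter.2 ⟨ih (by omega), fun j _ ↦ ?_⟩
    rcases Nat.eq_zero_or_pos τ with rfl | hτ
    · simp [elimRho, EReal.mul_top_of_pos (by norm_num : (0 : EReal) < 2)]
    · rw [two_mul_elimRho_succ hτ.ne', EReal.coe_le_coe_iff]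
      have hj := abs_le.1 (hX τ hτ ht j)
      have hi := abs_le.1 (hX τ hτ ht iStar)
      linarith [hstar j]

lemma sub_le_of_mem_elimS_succ (hstar : ∀ i, μ i ≤ μ iStar) (hX : EmpMeansNear K T X μ)
    {τ : ℕ} (hτ : 1 ≤ τ) (hτT : τ + 1 ≤ T) {i : Fin K} (hi : i ∈ elimS K T X (τ + 1)) :
    μ iStar - μ i ≤ 4 * elimRadius K T τ := by
  have hgap := (mem_filter.1 hi).2 iStar (mem_elimS_of_empMeansNear hstar hX (by omega))
  rw [two_mul_elimRho_succ (by omega), EReal.coe_le_coe_iff] at hgap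
  have hj := abs_le.1 (hX τ hτ hτT i)
  have hi := abs_le.1 (hX τ hτ hτT iStar)
  linarith

lemma elimI_mem_elimS [NeZero K] {t : ℕ} (h : (elimS K T X t).Nonempty) :
    elimI K T X t ∈ elimS K T X t := by
  rw [elimI, dif_pos h]
  exact min'_mem _ _

lemma regret_le_of_empMeansNear [NeZero K] (hT : 1 ≤ T) (hstar : ∀ i, μ i ≤ μ iStar)
    (hμ : ∀ i, μ i ∈ Set.Icc (0 : ℝ) 1) (hX : EmpMeansNear K T X μ) :
    ∑ t ∈ Icc 1 T, (μ iStar - μ (elimI K T X t))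
      ≤ 1 + 4 * √(2 * T * Real.log ((K : ℝ) * (T : ℝ) ^ 2)) := by
  obtain ⟨n, rfl⟩ : ∃ n, T = n + 1 := ⟨T - 1, by omega⟩
  have hfirst : μ iStar - μ (elimI K (n + 1) X 1) ≤ 1 := by
    linarith [(hμ iStar).2, (hμ (elimI K (n + 1) X 1)).1]
  have hlater : ∀ τ ∈ Icc 1 n, μ iStar - μ (elimI K (n + 1) X (τ + 1))
      ≤ 4 * elimRadius K (n + 1) τ := fun τ hτ ↦ by
    have hτ := mem_Icc.1 hτ
    have hS : (elimS K (n + 1) X (τ + 1)).Nonempty :=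
      ⟨iStar, mem_elimS_of_empMeansNear hstar hX (by omega)⟩
    exact sub_le_of_mem_elimS_succ hstar hX hτ.1 (by omega) (elimI_mem_elimS hS)
  rw [← insert_Icc_add_one_left_eq_Icc (by omega), sum_insert (by simp),
    ← map_add_right_Icc, sum_map]
  have hsum : ∑ τ ∈ Icc 1 n, elimRadius K (n + 1) τ
      ≤ √(2 * (n + 1 : ℕ) * Real.log ((K : ℝ) * ((n + 1 : ℕ) : ℝ) ^ 2)) :=
    (sum_le_sum_of_subset_of_nonneg (Icc_subset_Icc_right n.le_succ)
      fun τ _ _ ↦ Real.sqrt_nonneg _).trans (sum_elimRadius_le K (n + 1) (n + 1))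
  calc _ ≤ 1 + ∑ τ ∈ Icc 1 n, 4 * elimRadius K (n + 1) τ :=
        add_le_add hfirst (sum_le_sum hlater)
    _ ≤ _ := by rw [← mul_sum]; linarith

end Elimination

section Rewards

variable {K T : ℕ}

lemma measurable_extendRewards (s : ℕ) (i : Fin K) :
    Measurable fun ω : Fin T → Fin K → ℝ ↦ extendRewards T ω s i := by
  unfold extendRewards
  split_ifs <;> fun_prop

lemma measurable_empMean_extendRewards (τ : ℕ) (i : Fin K) :
    Measurable fun ω : Fin T → Fin K → ℝ ↦ empMean (extendRewards T ω) τ i :=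
  (Finset.measurable_sum _ fun s _ ↦ measurable_extendRewards s i).div_const _

lemma natCast_mul_empMean_extendRewards_sub {τ : ℕ} (hτT : τ ≤ T) (ω : Fin T → Fin K → ℝ)
    (i : Fin K) (c : ℝ) :
    τ * (empMean (extendRewards T ω) τ i - c)
      = ∑ s ∈ univ.map (Fin.castLEEmb hτT), (ω s i - c) := by
  have hsum : ∑ s ∈ range τ, extendRewards T ω s i = ∑ s : Fin τ, ω (Fin.castLE hτT s) i := by
    rw [sum_range]
    exact sum_congr rfl fun s _ ↦ by simp [extendRewards, s.isLt.trans_le hτT, Fin.castLE]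
  rcases Nat.eq_zero_or_pos τ with rfl | hτ
  · simp
  rw [sum_map, sum_sub_distrib, sum_const, card_univ, Fintype.card_fin, nsmul_eq_mul, mul_sub,
    empMean, hsum, mul_div_cancel₀ _ (by positivity)]
  rfl

lemma measureReal_elimRadius_lt_abs_empMean_sub_le [NeZero K] (ν : Measure (Fin K → ℝ))
    [IsProbabilityMeasure ν] (hsupp : ∀ᵐ x ∂ν, ∀ i, x i ∈ Set.Icc (0 : ℝ) 1) {τ : ℕ}
    (hτ : 1 ≤ τ) (hτT : τ ≤ T) (i : Fin K) :
    (Measure.pi fun _ : Fin T ↦ ν).real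
        {ω | elimRadius K T τ < |empMean (extendRewards T ω) τ i - ∫ x, x i ∂ν|}
      ≤ 2 / (K * T ^ 2) := by
  have hKT : (1 : ℝ) ≤ K * T ^ 2 := by
    have : (1 : ℝ) ≤ K := by exact_mod_cast Nat.one_le_iff_ne_zero.2 (NeZero.ne K)
    have : (1 : ℝ) ≤ T := by exact_mod_cast hτ.trans hτT
    nlinarith
  have hτ0 : (0 : ℝ) < τ := by exact_mod_cast hτ
  have hexp : Real.exp (-2 * (τ * elimRadius K T τ) ^ 2 / τ) = 1 / (K * T ^ 2) := by
    rw [elimRadius, mul_pow, Real.sq_sqrt (div_nonneg (Real.log_nonneg hKT) (by positivity)),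
      show -2 * (τ ^ 2 * (Real.log (K * T ^ 2) / (2 * τ))) / τ = -Real.log (K * T ^ 2) by
        field_simp, Real.exp_neg, Real.exp_log (by positivity), one_div]
  calc _ ≤ (Measure.pi fun _ : Fin T ↦ ν).real
        {ω | τ * elimRadius K T τ
          ≤ |∑ s ∈ univ.map (Fin.castLEEmb hτT), (ω s i - ∫ x, x i ∂ν)|} := by
        refine measureReal_mono fun ω (hω : elimRadius K T τ < _) ↦ ?_
        change (τ : ℝ) * _ ≤ _
        rw [← natCast_mul_empMean_extendRewards_sub, abs_mul, Nat.abs_cast]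
        exact mul_le_mul_of_nonneg_left hω.le hτ0.le
    _ ≤ 2 * Real.exp (-2 * (τ * elimRadius K T τ) ^ 2
          / (#(univ.map (Fin.castLEEmb hτT)) * (1 - 0) ^ 2)) :=
        measureReal_abs_sum_sub_integral_ge_le (f := fun x : Fin K → ℝ ↦ x i)
          (measurable_pi_apply i).aemeasurable (by filter_upwards [hsupp] with x hx using hx i)
          (univ.map (Fin.castLEEmb hτT)) (ε := τ * elimRadius K T τ)
          (mul_nonneg hτ0.le (Real.sqrt_nonneg _))
    _ = 2 / (K * T ^ 2) := by
        rw [card_map, card_univ, Fintype.card_fin, sub_zero, one_pow, mul_one, hexp, mul_one_div]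

lemma measurableSet_empMeansNear (μ : Fin K → ℝ) :
    MeasurableSet {ω : Fin T → Fin K → ℝ | EmpMeansNear K T (extendRewards T ω) μ} := by
  simp only [EmpMeansNear, Set.ofPred_forall]
  exact .iInter fun τ ↦ .iInter fun _ ↦ .iInter fun _ ↦ .iInter fun i ↦
    measurableSet_le ((measurable_empMean_extendRewards τ i).sub_const _).abs measurable_const

lemma measureReal_not_empMeansNear_le [NeZero K] (ν : Measure (Fin K → ℝ))
    [IsProbabilityMeasure ν] (hsupp : ∀ᵐ x ∂ν, ∀ i, x i ∈ Set.Icc (0 : ℝ) 1)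
    {μ : Fin K → ℝ} (hμ : ∀ i, μ i = ∫ x, x i ∂ν) :
    (Measure.pi fun _ : Fin T ↦ ν).real {ω | ¬ EmpMeansNear K T (extendRewards T ω) μ}
      ≤ 2 / T := by
  set bad : ℕ → Fin K → Set (Fin T → Fin K → ℝ) := fun τ i ↦
    {ω | elimRadius K T τ < |empMean (extendRewards T ω) τ i - ∫ x, x i ∂ν|}
  calc _ ≤ (Measure.pi fun _ : Fin T ↦ ν).real (⋃ τ ∈ Icc 1 (T - 1), ⋃ i ∈ univ, bad τ i) := by
        refine measureReal_mono (fun ω hω ↦ ?_) (measure_ne_top _ _)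
        obtain ⟨τ, hτ, hτT, i, hi⟩ : ∃ τ, 1 ≤ τ ∧ τ + 1 ≤ T ∧ ∃ i,
            elimRadius K T τ < |empMean (extendRewards T ω) τ i - ∫ x, x i ∂ν| := by
          simpa [EmpMeansNear, hμ] using hω
        simp only [Set.mem_iUnion, mem_Icc, mem_univ, exists_true_left]
        exact ⟨τ, ⟨hτ, by omega⟩, i, hi⟩
    _ ≤ ∑ τ ∈ Icc 1 (T - 1), ∑ i : Fin K, (Measure.pi fun _ : Fin T ↦ ν).real (bad τ i) :=
        (measureReal_biUnion_finset_le _ _).trans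
          (sum_le_sum fun τ _ ↦ measureReal_biUnion_finset_le _ _)
    _ ≤ ∑ τ ∈ Icc 1 (T - 1), ∑ i : Fin K, 2 / (K * T ^ 2 : ℝ) := by
        gcongr with τ hτ i
        exact measureReal_elimRadius_lt_abs_empMean_sub_le ν hsupp (mem_Icc.1 hτ).1
          (by have := (mem_Icc.1 hτ).2; omega) i
    _ ≤ T * (K * (2 / (K * T ^ 2))) := by
        simp only [sum_const, card_univ, Fintype.card_fin, Nat.card_Icc, nsmul_eq_mul]
        gcongr
        exact_mod_cast (by omega : T - 1 + 1 - 1 ≤ T)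
    _ = 2 / T := by
        rcases eq_or_ne T 0 with rfl | hT
        · simp
        · field_simp [NeZero.ne K]

end Rewards

/-- **Distribution independent regret bound.** For every `K ≥ 1`, `T ≥ 1` and every
probability distribution `ν` on `[0,1]^K`, the pseudo-regret of ELIM with horizon `T`
is at most `4 √(2 T ln(K T²)) + 3`. -/
theorem elim_distribution_independent_regret
    (K T : ℕ) [NeZero K] (hT : 1 ≤ T)
    (ν : Measure (Fin K → ℝ)) [IsProbabilityMeasure ν]
    (hsupp : ∀ᵐ x ∂ν, ∀ i, x i ∈ Set.Icc (0 : ℝ) 1)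
    (μ : Fin K → ℝ) (hμ : ∀ i, μ i = ∫ x, x i ∂ν)
    (iStar : Fin K) (hstar : ∀ i, μ i ≤ μ iStar) :
    (∫ ω, (∑ t ∈ Finset.Icc 1 T, (μ iStar - μ (elimI K T (extendRewards T ω) t)))
        ∂(Measure.pi fun _ : Fin T => ν))
      ≤ 4 * Real.sqrt (2 * T * Real.log ((K : ℝ) * (T : ℝ) ^ 2)) + 3 := by
  have hmean (i : Fin K) : μ i ∈ Set.Icc (0 : ℝ) 1 := by
    have hi : ∀ᵐ x ∂ν, x i ∈ Set.Icc (0 : ℝ) 1 := by filter_upwards [hsupp] with x hx using hx i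
    rw [hμ i]
    exact ⟨integral_nonneg_of_ae (hi.mono fun x hx ↦ hx.1),
      (integral_mono_ae (.of_mem_Icc 0 1 (measurable_pi_apply i).aemeasurable hi)
        (integrable_const 1) (hi.mono fun x hx ↦ hx.2)).trans_eq (by simp)⟩
  have hgap_le_one (ω : Fin T → Fin K → ℝ) (t : ℕ) :
      μ iStar - μ (elimI K T (extendRewards T ω) t) ≤ 1 := by
    linarith [(hmean iStar).2, (hmean (elimI K T (extendRewards T ω) t)).1]
  set G := {ω : Fin T → Fin K → ℝ | EmpMeansNear K T (extendRewards T ω) μ}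
  calc _ ≤ (1 + 4 * √(2 * T * Real.log ((K : ℝ) * (T : ℝ) ^ 2)))
          * (Measure.pi fun _ : Fin T ↦ ν).real G + T * (Measure.pi fun _ : Fin T ↦ ν).real Gᶜ :=
        integral_le_mul_measureReal_add_mul_measureReal_compl (measurableSet_empMeansNear μ)
          (ae_of_all _ fun ω ↦ sum_nonneg fun t _ ↦ sub_nonneg.2 (hstar _))
          (fun ω hω ↦ regret_le_of_empMeansNear hT hstar hmean hω)
          (fun ω ↦ (sum_le_sum fun t _ ↦ hgap_le_one ω t).trans_eq (by simp))
    _ ≤ (1 + 4 * √(2 * T * Real.log ((K : ℝ) * (T : ℝ) ^ 2))) * 1 + T * (2 / T) := by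
        gcongr
        · exact measureReal_le_one
        · exact measureReal_not_empMeansNear_le ν hsupp hμ
    _ = _ := by
        field_simp
        ring
end

section
/- Corollary of the distribution-dependent bound: suppose the best arm i* satisfies i* ≥ 2 and is unique (μ_{i*} > μ_i for all i ≠ i*). Let Δ_{(1)} ≥ … ≥ Δ_{(i*)} = 0 be the decreasing rearrangement of {Δ_i : 1 ≤ i ≤ i*} and C = 8·ln(K·T²). Then the pseudo-regret of ELIM with horizon T satisfies R(T) ≤ (C/Δ_{(i*−1)}² + 1)·Δ_{(1)} + 2. -/
open MeasureTheory Finset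

/-!
On the event that every empirical mean used by ELIM lies within its confidence radius of the
true mean, the best arm is never eliminated, so ELIM only plays arms of index at most `i*`,
each costing at most `Δ_(1)` per round. Once `4 ρ_t < Δ_(i*-1)`, that is after at most
`C / Δ_(i*-1)² + 1` rounds, every arm of smaller index than `i*` has been eliminated and `i*`
itself is played. By Hoeffding's inequality and a union bound over rounds and arms, the event
fails with probability at most `2 / T`, and there the regret is at most `T`.
-/

noncomputable def confRadius (K T m : ℕ) : ℝ :=
  √(Real.log ((K : ℝ) * (T : ℝ) ^ 2) / (2 * m))

-- `confRadius K T m` is ELIM's radius `ρ_{m+1}` after `m` rounds (`elimRho_succ`); `m = 0` is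
-- excluded because `ρ_1 = ∞`, while `confRadius K T 0 = 0` is a junk value.
def EmpMeansAccurate {K : ℕ} (T : ℕ) (X : ℕ → Fin K → ℝ) (μ : Fin K → ℝ) : Prop :=
  ∀ m ∈ Ico 1 T, ∀ i, |empMean X m i - μ i| ≤ confRadius K T m

lemma log_mul_sq_nonneg (K T : ℕ) : 0 ≤ Real.log ((K : ℝ) * (T : ℝ) ^ 2) := by
  exact_mod_cast Real.log_natCast_nonneg (K * T ^ 2)

lemma confRadius_sq (K T m : ℕ) :
    confRadius K T m ^ 2 = Real.log ((K : ℝ) * (T : ℝ) ^ 2) / (2 * m) := by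
  rw [confRadius, Real.sq_sqrt]
  have := log_mul_sq_nonneg K T
  positivity

section Elimination

variable {K T : ℕ} {X : ℕ → Fin K → ℝ}

lemma elimRho_succ_s3 {m : ℕ} (hm : 1 ≤ m) : elimRho K T (m + 1) = confRadius K T m := by
  rw [elimRho, if_neg (by omega), confRadius]
  push_cast
  ring_nf

lemma elimS_one : elimS K T X 1 = univ := by
  ext i
  simp [elimS, elimRho, EReal.mul_top_of_pos two_pos]

lemma mem_elimS_succ {m : ℕ} (hm : 1 ≤ m) {i : Fin K} :
    i ∈ elimS K T X (m + 1) ↔ i ∈ elimS K T X m ∧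
      ∀ j ∈ elimS K T X m, empMean X m j - empMean X m i ≤ 2 * confRadius K T m := by
  simp only [elimS, mem_filter, elimRho_succ_s3 hm,
    show (2 : EReal) * confRadius K T m = ((2 * confRadius K T m : ℝ) : EReal) by norm_cast,
    EReal.coe_le_coe_iff]

variable {μ : Fin K → ℝ} {iStar : Fin K}

lemma mem_elimS_of_accurate (hacc : EmpMeansAccurate T X μ) (hmax : ∀ j, μ j ≤ μ iStar) :
    ∀ t ≤ T, iStar ∈ elimS K T X t
  | 0, _ => mem_univ _
  | 1, _ => by rw [elimS_one]; exact mem_univ _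
  | m + 2, ht => by
    rw [mem_elimS_succ (by omega)]
    refine ⟨mem_elimS_of_accurate hacc hmax (m + 1) (by omega), fun j _ => ?_⟩
    have hm : m + 1 ∈ Ico 1 T := mem_Ico.2 ⟨by omega, by omega⟩
    have hj := abs_le.1 (hacc _ hm j)
    have hi := abs_le.1 (hacc _ hm iStar)
    linarith [hmax j]

lemma notMem_elimS_of_accurate (hacc : EmpMeansAccurate T X μ) (hmax : ∀ j, μ j ≤ μ iStar)
    {m : ℕ} (hm : m ∈ Ico 1 T) {j : Fin K}
    (hj : 4 * confRadius K T m < μ iStar - μ j) : j ∉ elimS K T X (m + 1) := by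
  intro hmem
  have hstar := mem_elimS_of_accurate hacc hmax m (mem_Ico.1 hm).2.le
  have hclose := ((mem_elimS_succ (mem_Ico.1 hm).1).1 hmem).2 iStar hstar
  have hdj := abs_le.1 (hacc m hm j)
  have hdi := abs_le.1 (hacc m hm iStar)
  linarith

variable [NeZero K] {t : ℕ} {i : Fin K}

lemma elimI_le_of_mem (hi : i ∈ elimS K T X t) : elimI K T X t ≤ i := by
  rw [elimI, dif_pos ⟨i, hi⟩]
  exact min'_le _ _ hi

lemma elimI_eq_of_mem (hi : i ∈ elimS K T X t) (hlt : ∀ j < i, j ∉ elimS K T X t) :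
    elimI K T X t = i := by
  refine (elimI_le_of_mem hi).antisymm (not_lt.1 fun h => hlt _ h ?_)
  rw [elimI, dif_pos ⟨i, hi⟩]
  exact min'_mem _ _

end Elimination

lemma four_mul_confRadius_lt {K T m : ℕ} {Δ : ℝ} (hΔ : 0 < Δ) (hm : 0 < m)
    (h : 8 * Real.log ((K : ℝ) * (T : ℝ) ^ 2) / Δ ^ 2 < m) : 4 * confRadius K T m < Δ := by
  have hm' : (0 : ℝ) < m := by exact_mod_cast hm
  rw [confRadius, show (4 : ℝ) = √(4 ^ 2) by simp, ← Real.sqrt_mul (by positivity),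
    Real.sqrt_lt' hΔ]
  rw [div_lt_iff₀ (by positivity)] at h
  rw [← mul_div_assoc, div_lt_iff₀ (by positivity)]
  linarith

lemma card_filter_Icc_sub_one_le (T : ℕ) {c : ℝ} (hc : 0 ≤ c) :
    (#{t ∈ Icc 1 T | ((t : ℕ) : ℝ) - 1 ≤ c} : ℝ) ≤ c + 1 := by
  have hsub : {t ∈ Icc 1 T | ((t : ℕ) : ℝ) - 1 ≤ c} ⊆ Icc 1 ⌊c + 1⌋₊ := fun t ht => by
    rw [mem_filter, mem_Icc] at ht
    exact mem_Icc.2 ⟨ht.1.1, Nat.le_floor (by linarith)⟩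
  calc (#{t ∈ Icc 1 T | ((t : ℕ) : ℝ) - 1 ≤ c} : ℝ) ≤ ⌊c + 1⌋₊ := by
        exact_mod_cast (card_le_card hsub).trans (by simp)
    _ ≤ c + 1 := Nat.floor_le (by linarith)

theorem sum_gap_elimI_le_of_accurate {K T : ℕ} [NeZero K] {X : ℕ → Fin K → ℝ}
    {μ : Fin K → ℝ} {iStar : Fin K} (hacc : EmpMeansAccurate T X μ)
    (hmax : ∀ j, μ j ≤ μ iStar) {G Δ : ℝ} (hG : ∀ j ≤ iStar, μ iStar - μ j ≤ G) (hΔ : 0 < Δ)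
    (hΔle : ∀ j < iStar, Δ ≤ μ iStar - μ j) :
    ∑ t ∈ Icc 1 T, (μ iStar - μ (elimI K T X t))
      ≤ (8 * Real.log ((K : ℝ) * (T : ℝ) ^ 2) / Δ ^ 2 + 1) * G := by
  set c := 8 * Real.log ((K : ℝ) * (T : ℝ) ^ 2) / Δ ^ 2
  have hc : 0 ≤ c := by
    have := log_mul_sq_nonneg K T
    positivity
  have hround : ∀ t ∈ Icc 1 T,
      μ iStar - μ (elimI K T X t) ≤ if ((t : ℕ) : ℝ) - 1 ≤ c then G else 0 := by
    intro t ht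
    obtain ⟨ht1, htT⟩ := mem_Icc.1 ht
    split_ifs with hct
    · exact hG _ (elimI_le_of_mem (mem_elimS_of_accurate hacc hmax t htT))
    · obtain ⟨m, rfl⟩ : ∃ m, t = m + 1 := ⟨t - 1, by omega⟩
      have hm1 : 1 ≤ m := Nat.one_le_iff_ne_zero.2 fun h0 => hct (by simp [h0, hc])
      have hm : m ∈ Ico 1 T := mem_Ico.2 ⟨hm1, by omega⟩
      have h4 : 4 * confRadius K T m < Δ :=
        four_mul_confRadius_lt hΔ hm1 (by push_cast at hct; linarith)
      rw [elimI_eq_of_mem (mem_elimS_of_accurate hacc hmax _ htT) fun j hj =>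
        notMem_elimS_of_accurate hacc hmax hm (h4.trans_le (hΔle j hj)), sub_self]
  calc ∑ t ∈ Icc 1 T, (μ iStar - μ (elimI K T X t))
      ≤ ∑ t ∈ Icc 1 T, if ((t : ℕ) : ℝ) - 1 ≤ c then G else 0 := sum_le_sum hround
    _ = #{t ∈ Icc 1 T | ((t : ℕ) : ℝ) - 1 ≤ c} * G := by
        rw [sum_ite, sum_const_zero, add_zero, sum_const, nsmul_eq_mul]
    _ ≤ (c + 1) * G :=
        mul_le_mul_of_nonneg_right (card_filter_Icc_sub_one_le T hc)
          ((sub_self _).symm.le.trans (hG iStar le_rfl))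

open ProbabilityTheory in
theorem measureReal_pi_le_abs_sum_sub_integral_le {ι α : Type*} [Fintype ι] [MeasurableSpace α]
    {ν : Measure α} [IsProbabilityMeasure ν] {Y : α → ℝ} (hY : AEMeasurable Y ν)
    (hb : ∀ᵐ x ∂ν, Y x ∈ Set.Icc (0 : ℝ) 1) (A : Finset ι) {ε : ℝ} (hε : 0 ≤ ε) :
    (Measure.pi fun _ : ι => ν).real {ω | ε ≤ |∑ s ∈ A, (Y (ω s) - ν[Y])|}
      ≤ 2 * Real.exp (-2 * ε ^ 2 / #A) := by
  set P := Measure.pi fun _ : ι => ν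
  have hsub : ∀ s, HasSubgaussianMGF (fun ω : ι → α => Y (ω s) - ν[Y]) (1 / 4) P := by
    intro s
    have hc : (‖(1 : ℝ) - 0‖₊ / 2) ^ 2 = 1 / 4 := by
      rw [sub_zero, nnnorm_one]
      norm_num
    rw [← hc]
    refine HasSubgaussianMGF.of_map (X := fun x => Y x - ν[Y]) (Y := fun ω : ι → α => ω s)
      (measurable_pi_apply s).aemeasurable ?_
    rw [show P.map (fun ω => ω s) = ν from (measurePreserving_eval _ s).map_eq]
    exact hasSubgaussianMGF_of_mem_Icc hY hb
  have hind : iIndepFun (fun s (ω : ι → α) => Y (ω s) - ν[Y]) P :=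
    iIndepFun_pi fun _ => hY.sub_const _
  have hind' : iIndepFun (fun s (ω : ι → α) => -(Y (ω s) - ν[Y])) P :=
    iIndepFun_pi fun _ => (hY.sub_const _).neg
  have hexp : Real.exp (-ε ^ 2 / (2 * ∑ s ∈ A, (1 / 4 : NNReal)))
      = Real.exp (-2 * ε ^ 2 / #A) := by
    congr 1
    simp only [sum_const, nsmul_eq_mul]
    push_cast
    ring
  have hup := HasSubgaussianMGF.measure_sum_ge_le_of_iIndepFun hind (s := A)
    (fun s _ => hsub s) hε
  have hlo := HasSubgaussianMGF.measure_sum_ge_le_of_iIndepFun hind' (s := A)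
    (fun s _ => (hsub s).neg) hε
  rw [hexp] at hup hlo
  calc P.real {ω | ε ≤ |∑ s ∈ A, (Y (ω s) - ν[Y])|}
      ≤ P.real ({ω | ε ≤ ∑ s ∈ A, (Y (ω s) - ν[Y])}
          ∪ {ω | ε ≤ ∑ s ∈ A, -(Y (ω s) - ν[Y])}) := by
        refine measureReal_mono fun ω (hω : ε ≤ |_|) => ?_
        rw [Set.mem_union, Set.mem_ofPred, Set.mem_ofPred, sum_neg_distrib]
        exact le_abs.1 hω
    _ ≤ _ := (measureReal_union_le _ _).trans (by linarith)

lemma sum_range_extendRewards {K T m : ℕ} (hm : m ≤ T) (ω : Fin T → Fin K → ℝ) (i : Fin K) :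
    ∑ s ∈ range m, extendRewards T ω s i
      = ∑ s ∈ (range m).attachFin (fun _ hs => (mem_range.1 hs).trans_le hm), ω s i := by
  conv_lhs => rw [← image_val_attachFin (fun _ hs => (mem_range.1 hs).trans_le hm)]
  rw [sum_image (Fin.val_injective.injOn)]
  exact sum_congr rfl fun s _ => by simp [extendRewards]

theorem measureReal_confRadius_lt_abs_empMean_sub_le {K T : ℕ} {ν : Measure (Fin K → ℝ)}
    [IsProbabilityMeasure ν] (hsupp : ∀ᵐ x ∂ν, ∀ i, x i ∈ Set.Icc (0 : ℝ) 1)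
    {μ : Fin K → ℝ} (hμ : ∀ i, μ i = ∫ x, x i ∂ν) {m : ℕ} (hm : m ∈ Ico 1 T) (i : Fin K) :
    (Measure.pi fun _ : Fin T => ν).real
        {ω | confRadius K T m < |empMean (extendRewards T ω) m i - μ i|}
      ≤ 2 / ((K : ℝ) * (T : ℝ) ^ 2) := by
  obtain ⟨hm1, hmT⟩ := mem_Ico.1 hm
  set A := (range m).attachFin (fun s hs => (mem_range.1 hs).trans_le hmT.le)
  have hA : (#A : ℝ) = m := by simp [A]
  have hm0 : (0 : ℝ) < m := by exact_mod_cast hm1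
  have hKT : (0 : ℝ) < K * T ^ 2 := by
    have : 0 < K * T ^ 2 := Nat.mul_pos i.pos (pow_pos (by omega) 2)
    exact_mod_cast this
  have hdev : ∀ ω : Fin T → Fin K → ℝ,
      empMean (extendRewards T ω) m i - μ i = (∑ s ∈ A, (ω s i - μ i)) / m := by
    intro ω
    rw [empMean, sum_range_extendRewards hmT.le, sum_sub_distrib, sum_const, nsmul_eq_mul, hA,
      sub_div, mul_div_cancel_left₀ _ hm0.ne']
  calc _ ≤ (Measure.pi fun _ : Fin T => ν).real
          {ω | m * confRadius K T m ≤ |∑ s ∈ A, (ω s i - ∫ x, x i ∂ν)|} := by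
        refine measureReal_mono (Set.ofPred_subset_ofPred.2 fun ω hω => ?_)
        rw [hdev, abs_div, Nat.abs_cast, lt_div_iff₀ hm0] at hω
        rw [← hμ i]
        exact (mul_comm _ _).trans_le hω.le
    _ ≤ 2 * Real.exp (-2 * (m * confRadius K T m) ^ 2 / #A) :=
        measureReal_pi_le_abs_sum_sub_integral_le (measurable_pi_apply i).aemeasurable
          (hsupp.mono fun x hx => hx i) A (mul_nonneg hm0.le (Real.sqrt_nonneg _))
    _ = 2 / ((K : ℝ) * (T : ℝ) ^ 2) := by
        rw [hA, mul_pow, confRadius_sq,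
          show -2 * (m ^ 2 * (Real.log (K * T ^ 2) / (2 * m))) / m = -Real.log (K * T ^ 2) by
            field_simp,
          Real.exp_neg, Real.exp_log hKT, div_eq_mul_inv]

theorem measureReal_not_empMeansAccurate_le {K T : ℕ} {ν : Measure (Fin K → ℝ)}
    [IsProbabilityMeasure ν] (hsupp : ∀ᵐ x ∂ν, ∀ i, x i ∈ Set.Icc (0 : ℝ) 1)
    {μ : Fin K → ℝ} (hμ : ∀ i, μ i = ∫ x, x i ∂ν) :
    (Measure.pi fun _ : Fin T => ν).real {ω | ¬ EmpMeansAccurate T (extendRewards T ω) μ}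
      ≤ 2 / T := by
  have hunion : {ω | ¬ EmpMeansAccurate T (extendRewards T ω) μ} = ⋃ m ∈ Ico 1 T, ⋃ i,
      {ω | confRadius K T m < |empMean (extendRewards T ω) m i - μ i|} := by
    ext ω
    simp [EmpMeansAccurate, and_assoc]
  have hcount : (#(Ico 1 T) : ℝ) * (K * (2 / (K * T ^ 2))) ≤ 2 / T := by
    rcases eq_or_ne K 0 with rfl | hK
    · simp only [CharP.cast_eq_zero, zero_mul, mul_zero]
      positivity
    rcases eq_or_ne T 0 with rfl | hT
    · simp
    have hT' : (0 : ℝ) < T := by positivity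
    rw [Nat.card_Ico, show (K : ℝ) * (2 / (K * T ^ 2)) = 2 / T ^ 2 by field_simp, ← mul_div_assoc,
      div_le_div_iff₀ (by positivity) hT']
    have : ((T - 1 : ℕ) : ℝ) ≤ T := by exact_mod_cast Nat.sub_le T 1
    nlinarith
  rw [hunion]
  calc _ ≤ ∑ m ∈ Ico 1 T, (Measure.pi fun _ : Fin T => ν).real
          (⋃ i, {ω | confRadius K T m < |empMean (extendRewards T ω) m i - μ i|}) :=
        measureReal_biUnion_finset_le _ _
    _ ≤ ∑ m ∈ Ico 1 T, ∑ i : Fin K, 2 / ((K : ℝ) * T ^ 2) :=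
        sum_le_sum fun m hm => (measureReal_iUnion_fintype_le _).trans
          (sum_le_sum fun i _ => measureReal_confRadius_lt_abs_empMean_sub_le hsupp hμ hm i)
    _ ≤ 2 / T := by simpa using hcount

lemma integral_mem_Icc_of_ae_mem {α : Type*} [MeasurableSpace α] {ν : Measure α}
    [IsProbabilityMeasure ν] {Y : α → ℝ} (hY : AEMeasurable Y ν) {a b : ℝ}
    (hb : ∀ᵐ x ∂ν, Y x ∈ Set.Icc a b) : ∫ x, Y x ∂ν ∈ Set.Icc a b :=
  (convex_Icc a b).integral_mem isClosed_Icc hb (Integrable.of_mem_Icc a b hY hb)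

theorem integral_le_add_mul_measureReal {Ω : Type*} [MeasurableSpace Ω] {P : Measure Ω}
    [IsProbabilityMeasure P] {f : Ω → ℝ} {E : Set Ω} {B M : ℝ} (hB : 0 ≤ B)
    (hf0 : ∀ ω, 0 ≤ f ω) (hfM : ∀ ω, f ω ≤ M) (hfB : ∀ ω ∉ E, f ω ≤ B) :
    ∫ ω, f ω ∂P ≤ B + M * P.real E := by
  have hE := measurableSet_toMeasurable P E
  have hind : Integrable ((toMeasurable P E).indicator fun _ => M) P :=
    (integrable_const M).indicator hE
  calc ∫ ω, f ω ∂P ≤ ∫ ω, (B + (toMeasurable P E).indicator (fun _ => M) ω) ∂P := by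
        refine integral_mono_of_nonneg (ae_of_all _ hf0) ((integrable_const B).add hind)
          (ae_of_all _ fun ω => ?_)
        show f ω ≤ B + _
        by_cases hω : ω ∈ toMeasurable P E
        · rw [Set.indicator_of_mem hω]
          linarith [hfM ω]
        · rw [Set.indicator_of_notMem hω, add_zero]
          exact hfB ω fun h => hω (subset_toMeasurable P E h)
    _ = B + M * P.real E := by
        rw [integral_add (integrable_const B) hind, integral_const, integral_indicator_const _ hE]
        simp [measureReal_def, measure_toMeasurable, mul_comm]

theorem gap_bounds_of_rearrangement {K : ℕ} {μ : Fin K → ℝ} {iStar : Fin K}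
    (hstar : ∀ i, i ≠ iStar → μ i < μ iStar) (hpos : 1 ≤ iStar.val) {n : ℕ}
    (hn : n = iStar.val + 1) {σ : Equiv.Perm ℕ} (hσ : ∀ i ∈ Icc 1 n, σ i ∈ Icc 1 n) {D : ℕ → ℝ}
    (hD : ∀ i ∈ Icc 1 n, ∃ j : Fin K, (j : ℕ) + 1 = σ i ∧ D i = μ iStar - μ j)
    (hanti : ∀ i j, 1 ≤ i → i ≤ j → j ≤ n → D j ≤ D i) (hlast : D n = 0) :
    (∀ j ≤ iStar, μ iStar - μ j ≤ D 1) ∧ 0 < D (n - 1) ∧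
      ∀ j < iStar, D (n - 1) ≤ μ iStar - μ j := by
  have hsurj : Set.SurjOn σ (Icc 1 n) (Icc 1 n) :=
    surjOn_of_injOn_of_card_le σ (fun i hi => hσ i hi) σ.injective.injOn le_rfl
  have hposition : ∀ j ≤ iStar, ∃ b ∈ Icc 1 n, σ b = j + 1 ∧ D b = μ iStar - μ j := by
    intro j (hj : (j : ℕ) ≤ iStar)
    obtain ⟨b, hb, hσb⟩ := hsurj (mem_coe.2 (mem_Icc.2 ⟨by omega, by omega⟩) : (j : ℕ) + 1 ∈ _)
    obtain ⟨j', hj', hDb⟩ := hD b hb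
    obtain rfl : j' = j := Fin.ext (by omega)
    exact ⟨b, hb, hσb, hDb⟩
  have hσn : σ n = n := by
    obtain ⟨j, hj, hDj⟩ := hD n (mem_Icc.2 ⟨by omega, le_rfl⟩)
    obtain rfl : j = iStar := by
      by_contra hne
      linarith [hstar j hne]
    omega
  refine ⟨fun j hj => ?_, ?_, fun j hj => ?_⟩
  · obtain ⟨b, hb, -, hDb⟩ := hposition j hj
    exact hDb ▸ hanti 1 b le_rfl (mem_Icc.1 hb).1 (mem_Icc.1 hb).2
  · obtain ⟨j, hj, hDj⟩ := hD (n - 1) (mem_Icc.2 ⟨by omega, by omega⟩)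
    have hne : j ≠ iStar := by
      rintro rfl
      have := σ.injective (hσn.trans (hn.trans hj))
      omega
    exact hDj ▸ sub_pos.2 (hstar j hne)
  · obtain ⟨b, hb, hσb, hDb⟩ := hposition j hj.le
    have hbn : b ≠ n := by
      rintro rfl
      have : (j : ℕ) < iStar := hj
      omega
    exact hDb ▸ hanti b (n - 1) (mem_Icc.1 hb).1 (by have := (mem_Icc.1 hb).2; omega) (by omega)

/-- **Corollary of the distribution dependent regret bound.** With `D 1 ≥ … ≥ D n = 0`
(`n = iStar.val + 1` the 1-indexed position of the unique best arm, `iStar` in position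
at least 2) the decreasing rearrangement of the gaps of the arms `i ≤ iStar` and
`C = 8 ln(K T²)`, the pseudo-regret of ELIM with horizon `T` is at most
`(C / (D (n-1))² + 1) · D 1 + 2`. -/
theorem elim_distribution_dependent_regret_corollary
    (K T : ℕ) [NeZero K]
    (ν : Measure (Fin K → ℝ)) [IsProbabilityMeasure ν]
    (hsupp : ∀ᵐ x ∂ν, ∀ i, x i ∈ Set.Icc (0 : ℝ) 1)
    (μ : Fin K → ℝ) (hμ : ∀ i, μ i = ∫ x, x i ∂ν)
    (iStar : Fin K) (hstar : ∀ i, i ≠ iStar → μ i < μ iStar)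
    (hpos : 1 ≤ iStar.val)
    (n : ℕ) (hn : n = iStar.val + 1)
    (σ : Equiv.Perm ℕ) (hσ : ∀ i ∈ Finset.Icc 1 n, σ i ∈ Finset.Icc 1 n)
    (D : ℕ → ℝ)
    (hD : ∀ i, ∀ hi : i ∈ Finset.Icc 1 n,
      D i = μ iStar - μ ⟨σ i - 1, by
        have h1 := hσ i hi
        rw [Finset.mem_Icc] at h1
        have h2 := iStar.isLt
        omega⟩)
    (hanti : ∀ i j, 1 ≤ i → i ≤ j → j ≤ n → D j ≤ D i)
    (hlast : D n = 0)
    (C : ℝ) (hC : C = 8 * Real.log ((K : ℝ) * (T : ℝ) ^ 2)) :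
    (∫ ω, (∑ t ∈ Finset.Icc 1 T, (μ iStar - μ (elimI K T (extendRewards T ω) t)))
        ∂(Measure.pi fun _ : Fin T => ν))
      ≤ (C / (D (n - 1)) ^ 2 + 1) * D 1 + 2 := by
  subst hC
  have hmax : ∀ j, μ j ≤ μ iStar := fun j =>
    (eq_or_ne j iStar).elim (fun h => h ▸ le_rfl) fun h => (hstar j h).le
  have hmean (i : Fin K) : μ i ∈ Set.Icc (0 : ℝ) 1 := hμ i ▸
    integral_mem_Icc_of_ae_mem (measurable_pi_apply i).aemeasurable (hsupp.mono fun x hx => hx i)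
  have hgap_le_one (j : Fin K) : μ iStar - μ j ≤ 1 := by
    linarith [(hmean iStar).2, (hmean j).1]
  obtain ⟨hG, hΔ, hΔle⟩ := gap_bounds_of_rearrangement hstar hpos hn hσ
    (fun i hi => ⟨_, by have := mem_Icc.1 (hσ i hi); simp only; omega, hD i hi⟩) hanti hlast
  have hB : 0 ≤ (8 * Real.log ((K : ℝ) * (T : ℝ) ^ 2) / D (n - 1) ^ 2 + 1) * D 1 := by
    have := log_mul_sq_nonneg K T
    have := sub_self (μ iStar) ▸ hG iStar le_rfl
    positivity
  have hregret_le (ω : Fin T → Fin K → ℝ) :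
      ∑ t ∈ Icc 1 T, (μ iStar - μ (elimI K T (extendRewards T ω) t)) ≤ T :=
    (sum_le_card_nsmul _ _ 1 fun t _ => hgap_le_one _).trans (by simp)
  calc _ ≤ (8 * Real.log ((K : ℝ) * (T : ℝ) ^ 2) / D (n - 1) ^ 2 + 1) * D 1
        + T * (Measure.pi fun _ : Fin T => ν).real
          {ω | ¬ EmpMeansAccurate T (extendRewards T ω) μ} :=
        integral_le_add_mul_measureReal hB (fun ω => sum_nonneg fun t _ => sub_nonneg.2 (hmax _))
          hregret_le fun ω hω => sum_gap_elimI_le_of_accurate (not_not.1 hω) hmax hG hΔ hΔle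
    _ ≤ _ + T * (2 / T) := by grw [measureReal_not_empMeansAccurate_le hsupp hμ]
    _ ≤ _ + 2 := by
        rw [mul_div_assoc']
        gcongr
        exact div_le_of_le_mul₀ T.cast_nonneg zero_le_two (mul_comm _ _).le
end

section
/- Bound on the integer program: let n ≥ 2 be an integer, let Δ_1, …, Δ_n be reals with Δ_n = 0 and Δ_j > 0 for all j < n, let Δ_{(1)} ≥ Δ_{(2)} ≥ … ≥ Δ_{(n)} = 0 be the decreasing rearrangement of (Δ_1, …, Δ_n), and let C > 0. Then for every tuple (a_1, …, a_n) of natural numbers satisfying ∑_{i=1}^j a_i ≤ C/Δ_j² + 1 for every index j < n with a_j > 0, we have ∑_{j=1}^n a_j·Δ_j ≤ Δ_{(1)} + C/Δ_{(1)} + C·∑_{i=2}^{n−1} (1/Δ_{(i)}² − 1/Δ_{(i−1)}²)·Δ_{(i)}. -/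
/-! Write `d m = Δ (σ m)` for the sorted gaps. Among `σ 1, …, σ i`, the constraint of the largest
original index `j` with `a j > 0` bounds the prefix sum `∑_{m ≤ i} a (σ m)` by `C / d i ^ 2 + 1`,
because `d i ≤ Δ j`. Abel summation writes the objective as `∑ (d i - d (i + 1)) * (prefix sum)`
with nonnegative weights `d i - d (i + 1)`, so it is at most `∑ (d i - d (i + 1)) * (C / d i ^ 2 + 1)`,
and summing by parts once more turns this into the right-hand side. -/

open Finset

section SummationByParts

variable {R : Type*} [CommRing R]

theorem sum_Icc_by_parts (d S : ℕ → R) {N : ℕ} (hN : 1 ≤ N) :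
    d 1 * S 1 + ∑ m ∈ Icc 2 N, d m * (S m - S (m - 1))
      = ∑ i ∈ Icc 1 N, (d i - d (i + 1)) * S i + d (N + 1) * S N := by
  induction N, hN using Nat.le_induction with
  | base => simp only [Icc_self, sum_singleton, Icc_eq_empty_of_lt one_lt_two, sum_empty]; ring
  | succ N hN ih =>
    rw [sum_Icc_succ_top (by omega), sum_Icc_succ_top (by omega), ← add_assoc, ih,
      Nat.add_sub_cancel]
    ring

theorem sum_mul_eq_sum_sub_mul_partialSum (x d : ℕ → R) (N : ℕ) :
    ∑ m ∈ Icc 1 N, x m * d m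
      = ∑ i ∈ Icc 1 N, (d i - d (i + 1)) * ∑ m ∈ Icc 1 i, x m
          + d (N + 1) * ∑ m ∈ Icc 1 N, x m := by
  induction N with
  | zero => simp
  | succ N ih =>
    simp only [sum_Icc_succ_top (show 1 ≤ N + 1 by omega), ih]
    ring

end SummationByParts

theorem sum_mul_le_of_partialSum_le {R : Type*} [CommRing R] [PartialOrder R] [IsOrderedRing R]
    {x d B : ℕ → R} {N : ℕ} (hd : ∀ i ∈ Icc 1 N, d (i + 1) ≤ d i) (hdN : d (N + 1) = 0)
    (hB : ∀ i ∈ Icc 1 N, ∑ m ∈ Icc 1 i, x m ≤ B i) :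
    ∑ m ∈ Icc 1 N, x m * d m ≤ ∑ i ∈ Icc 1 N, (d i - d (i + 1)) * B i := by
  rw [sum_mul_eq_sum_sub_mul_partialSum, hdN, zero_mul, add_zero]
  exact sum_le_sum fun i hi => mul_le_mul_of_nonneg_left (hB i hi) (sub_nonneg.2 (hd i hi))

theorem sum_sub_mul_div_sq_add_one (d : ℕ → ℝ) (C : ℝ) {N : ℕ} (hN : 1 ≤ N) (hd1 : d 1 ≠ 0)
    (hdN : d (N + 1) = 0) :
    ∑ i ∈ Icc 1 N, (d i - d (i + 1)) * (C / d i ^ 2 + 1)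
      = d 1 + C / d 1 + C * ∑ i ∈ Icc 2 N, (1 / d i ^ 2 - 1 / d (i - 1) ^ 2) * d i := by
  have h := sum_Icc_by_parts d (fun i => C / d i ^ 2 + 1) hN
  rw [hdN, zero_mul, add_zero] at h
  rw [← h, mul_sum]
  congr 1
  · field_simp
    ring
  · exact sum_congr rfl fun i _ => by ring

theorem sum_le_of_forall_prefix_sum_le {U : Finset ℕ} {a : ℕ → ℝ} {B : ℝ} (ha : ∀ j, 0 ≤ a j)
    (hB : 0 ≤ B) (hU : ∀ j ∈ U, 1 ≤ j) (h : ∀ j ∈ U, 0 < a j → ∑ i ∈ Icc 1 j, a i ≤ B) :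
    ∑ j ∈ U, a j ≤ B := by
  rw [← sum_filter_of_ne (p := fun j => 0 < a j) fun j _ hj => (ha j).lt_of_ne' hj]
  obtain hU' | hU' := (U.filter fun j => 0 < a j).eq_empty_or_nonempty
  · simpa [hU'] using hB
  obtain ⟨hmax, hpos⟩ := mem_filter.1 (max'_mem _ hU')
  calc ∑ j ∈ U with 0 < a j, a j ≤ ∑ i ∈ Icc 1 (max' _ hU'), a i :=
        sum_le_sum_of_subset_of_nonneg
          (fun j hj => mem_Icc.2 ⟨hU j (mem_filter.1 hj).1, le_max' _ j hj⟩) fun i _ _ => ha i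
    _ ≤ B := h _ hmax hpos

theorem Finset.sum_comp_perm_of_mapsTo {α M : Type*} [AddCommMonoid M] {σ : Equiv.Perm α}
    {s : Finset α} (h : ∀ i ∈ s, σ i ∈ s) (f : α → M) : ∑ i ∈ s, f (σ i) = ∑ i ∈ s, f i := by
  have hmap : s.map σ.toEmbedding = s :=
    eq_of_subset_of_card_le (fun j hj => by obtain ⟨i, hi, rfl⟩ := mem_map.1 hj; exact h i hi)
      (card_map _).ge
  conv_rhs => rw [← hmap, sum_map]
  rfl

theorem perm_mapsTo_Ico_of_gap_eq_zero {n : ℕ} (hn : 1 ≤ n) {Δ : ℕ → ℝ} {σ : Equiv.Perm ℕ}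
    (hΔpos : ∀ j, 1 ≤ j → j < n → 0 < Δ j) (hσ : ∀ i ∈ Icc 1 n, σ i ∈ Icc 1 n)
    (hlast : Δ (σ n) = 0) : ∀ m ∈ Ico 1 n, σ m ∈ Ico 1 n := by
  have hσn : σ n = n := by
    obtain ⟨h1, hle⟩ := mem_Icc.1 (hσ n (mem_Icc.2 ⟨hn, le_rfl⟩))
    by_contra hne
    exact (hΔpos _ h1 (lt_of_le_of_ne hle hne)).ne' hlast
  intro m hm
  obtain ⟨h1, hle⟩ := mem_Icc.1 (hσ m (Ico_subset_Icc_self hm))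
  refine mem_Ico.2 ⟨h1, lt_of_le_of_ne hle fun h => (mem_Ico.1 hm).2.ne ?_⟩
  exact σ.injective (h.trans hσn.symm)

theorem prefix_sum_comp_perm_le {n : ℕ} {C : ℝ} (hC : 0 ≤ C) {Δ : ℕ → ℝ} {σ : Equiv.Perm ℕ}
    {a : ℕ → ℕ} (hΔpos : ∀ j, 1 ≤ j → j < n → 0 < Δ j) (hσ : ∀ m ∈ Ico 1 n, σ m ∈ Ico 1 n)
    (hanti : ∀ i j, 1 ≤ i → i ≤ j → j ≤ n → Δ (σ j) ≤ Δ (σ i))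
    (hcon : ∀ j, 1 ≤ j → j < n → 0 < a j →
      (∑ i ∈ Finset.Icc 1 j, (a i : ℝ)) ≤ C / (Δ j) ^ 2 + 1)
    {i : ℕ} (hi : i ∈ Ico 1 n) :
    ∑ m ∈ Icc 1 i, (a (σ m) : ℝ) ≤ C / Δ (σ i) ^ 2 + 1 := by
  have hmem : ∀ m ∈ Icc 1 i, σ m ∈ Ico 1 n := fun m hm =>
    hσ m (mem_Ico.2 ⟨(mem_Icc.1 hm).1, (mem_Icc.1 hm).2.trans_lt (mem_Ico.1 hi).2⟩)
  have hΔi : 0 < Δ (σ i) := hΔpos _ (mem_Ico.1 (hσ i hi)).1 (mem_Ico.1 (hσ i hi)).2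
  refine (sum_map (Icc 1 i) σ.toEmbedding fun j => (a j : ℝ)).symm.trans_le ?_
  refine sum_le_of_forall_prefix_sum_le (fun j => Nat.cast_nonneg _) (by positivity) ?_ ?_
  · intro j hj
    obtain ⟨m, hm, rfl⟩ := mem_map.1 hj
    exact (mem_Ico.1 (hmem m hm)).1
  · intro j hj haj
    obtain ⟨m, hm, rfl⟩ := mem_map.1 hj
    obtain ⟨h1m, hmi⟩ := mem_Icc.1 hm
    obtain ⟨h1σm, hσmn⟩ := mem_Ico.1 (hmem m hm)
    have hΔ : Δ (σ i) ≤ Δ (σ m) := hanti m i h1m hmi (mem_Ico.1 hi).2.le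
    calc ∑ j ∈ Icc 1 (σ m), (a j : ℝ) ≤ C / Δ (σ m) ^ 2 + 1 :=
          hcon (σ m) h1σm hσmn (by exact_mod_cast haj)
      _ ≤ C / Δ (σ i) ^ 2 + 1 := by gcongr

theorem integer_program_bound_general
    (n : ℕ) (hn : 2 ≤ n) (C : ℝ) (hC : 0 < C)
    (Δ : ℕ → ℝ) (hΔpos : ∀ j, 1 ≤ j → j < n → 0 < Δ j)
    (σ : Equiv.Perm ℕ) (hσ : ∀ i ∈ Finset.Icc 1 n, σ i ∈ Finset.Icc 1 n)
    (hanti : ∀ i j, 1 ≤ i → i ≤ j → j ≤ n → Δ (σ j) ≤ Δ (σ i))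
    (hlast : Δ (σ n) = 0)
    (a : ℕ → ℕ)
    (hcon : ∀ j, 1 ≤ j → j < n → 0 < a j →
      (∑ i ∈ Finset.Icc 1 j, (a i : ℝ)) ≤ C / (Δ j) ^ 2 + 1) :
    (∑ j ∈ Finset.Icc 1 n, (a j : ℝ) * Δ j)
      ≤ Δ (σ 1) + C / Δ (σ 1)
          + C * ∑ i ∈ Finset.Icc 2 (n - 1),
              (1 / (Δ (σ i)) ^ 2 - 1 / (Δ (σ (i - 1))) ^ 2) * Δ (σ i) := by
  have hN : n - 1 + 1 = n := by omega
  have hσIco := perm_mapsTo_Ico_of_gap_eq_zero (by omega) hΔpos hσ hlast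
  have hΔσ1 : 0 < Δ (σ 1) := by
    obtain ⟨h1, hlt⟩ := mem_Ico.1 (hσIco 1 (mem_Ico.2 ⟨le_rfl, by omega⟩))
    exact hΔpos _ h1 hlt
  have hdrop := sum_Icc_succ_top (show 1 ≤ n - 1 + 1 by omega) fun m => (a (σ m) : ℝ) * Δ (σ m)
  rw [hN, hlast, mul_zero, add_zero] at hdrop
  calc ∑ j ∈ Icc 1 n, (a j : ℝ) * Δ j
      = ∑ m ∈ Icc 1 (n - 1), (a (σ m) : ℝ) * Δ (σ m) := by
        rw [← hdrop, sum_comp_perm_of_mapsTo hσ fun j => (a j : ℝ) * Δ j]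
    _ ≤ ∑ i ∈ Icc 1 (n - 1), (Δ (σ i) - Δ (σ (i + 1))) * (C / Δ (σ i) ^ 2 + 1) :=
        sum_mul_le_of_partialSum_le
          (fun i hi => hanti i (i + 1) (mem_Icc.1 hi).1 (by omega) (by grind))
          (by rw [hN, hlast])
          fun i hi => prefix_sum_comp_perm_le hC.le hΔpos hσIco hanti hcon (by grind)
    _ = _ := sum_sub_mul_div_sq_add_one _ C (by omega) hΔσ1.ne' (by rw [hN, hlast])

/-- **Bound on the integer program.** Let `n ≥ 2`, let `Δ_1, …, Δ_n` be gaps with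
`Δ_n = 0` and `Δ_j > 0` for `j < n`, let `Δ_{(1)} ≥ … ≥ Δ_{(n)} = 0` be their
decreasing rearrangement (given as `Δ ∘ σ` for a permutation `σ` preserving
`{1, …, n}`), and let `C > 0`.  Every tuple of naturals `(a_1, …, a_n)` with
`∑_{i=1}^j a_i ≤ C / Δ_j² + 1` for each index `j < n` with `a_j > 0` satisfies
`∑_{j=1}^n a_j Δ_j ≤ Δ_{(1)} + C/Δ_{(1)} + C ∑_{i=2}^{n-1} (1/Δ_{(i)}² - 1/Δ_{(i-1)}²) Δ_{(i)}`. -/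
theorem integer_program_bound
    (n : ℕ) (hn : 2 ≤ n) (C : ℝ) (hC : 0 < C)
    (Δ : ℕ → ℝ) (hΔn : Δ n = 0) (hΔpos : ∀ j, 1 ≤ j → j < n → 0 < Δ j)
    (σ : Equiv.Perm ℕ) (hσ : ∀ i ∈ Finset.Icc 1 n, σ i ∈ Finset.Icc 1 n)
    (hanti : ∀ i j, 1 ≤ i → i ≤ j → j ≤ n → Δ (σ j) ≤ Δ (σ i))
    (hlast : Δ (σ n) = 0)
    (a : ℕ → ℕ)
    (hcon : ∀ j, 1 ≤ j → j < n → 0 < a j →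
      (∑ i ∈ Finset.Icc 1 j, (a i : ℝ)) ≤ C / (Δ j) ^ 2 + 1) :
    (∑ j ∈ Finset.Icc 1 n, (a j : ℝ) * Δ j)
      ≤ Δ (σ 1) + C / Δ (σ 1)
          + C * ∑ i ∈ Finset.Icc 2 (n - 1),
              (1 / (Δ (σ i)) ^ 2 - 1 / (Δ (σ (i - 1))) ^ 2) * Δ (σ i) :=
  integer_program_bound_general n hn C hC Δ hΔpos σ hσ hanti hlast a hcon
end

section
/- Exchange step preserves feasibility and objective: let n ≥ 2 be an integer, C > 0, and Δ_1, …, Δ_n reals with Δ_n = 0 and Δ_j > 0 for all j < n. Suppose Δ_{j0} < Δ_{j0+1} for some j0 with 1 ≤ j0 ≤ n−2, and let Δ̄ be obtained from Δ by swapping the entries at positions j0 and j0+1. If (x_1, …, x_n) ∈ ℕ^n satisfies ∑_{i=1}^j x_i ≤ C/Δ_j² + 1 for every j < n with x_j > 0, then the tuple x̄ obtained from x by swapping x_{j0} and x_{j0+1} satisfies ∑_{i=1}^j x̄_i ≤ C/Δ̄_j² + 1 for every j < n with x̄_j > 0, and moreover ∑_{j=1}^n x̄_j·Δ̄_j = ∑_{j=1}^n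 x_j·Δ_j. Consequently, the optimal value of the integer program with coefficients Δ is at most the optimal value of the integer program with coefficients Δ̄. -/
/-- Feasibility for the linear integer program: `(a_1, …, a_n) ∈ ℕ^n` is feasible for
the gap vector `Δ` and constant `C` when `∑_{i=1}^j a_i ≤ C / Δ_j² + 1` for every
index `j < n` with `a_j > 0`. -/
def Feasible (n : ℕ) (C : ℝ) (Δ : ℕ → ℝ) (a : ℕ → ℕ) : Prop :=
  ∀ j, 1 ≤ j → j < n → 0 < a j →
    (∑ i ∈ Finset.Icc 1 j, (a i : ℝ)) ≤ C / (Δ j) ^ 2 + 1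

/-- The optimal value of the integer program
`max ∑_{j=1}^n a_j Δ_j` subject to feasibility. -/
noncomputable def OptVal (n : ℕ) (C : ℝ) (Δ : ℕ → ℝ) : ℝ :=
  sSup {v : ℝ | ∃ a : ℕ → ℕ, Feasible n C Δ a ∧
    v = ∑ j ∈ Finset.Icc 1 n, (a j : ℝ) * Δ j}

private lemma sum_swap_eq (j0 m : ℕ) (hj0 : 1 ≤ j0) (hm : j0 + 1 ≤ m) (f : ℕ → ℝ) :
    ∑ i ∈ Finset.Icc 1 m, (if i = j0 then f (j0+1) else if i = j0+1 then f j0 else f i)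
      = ∑ i ∈ Finset.Icc 1 m, f i := by
  refine Finset.sum_equiv (Equiv.swap j0 (j0+1)) ?_ ?_
  · intro i
    simp only [Finset.mem_Icc, Equiv.swap_apply_def]
    split_ifs <;> omega
  · intro i _
    simp only [Equiv.swap_apply_def]
    split_ifs <;> rfl

private lemma obj_bound (n : ℕ) (C : ℝ) (hC : 0 < C) (Δ : ℕ → ℝ) (hΔn : Δ n = 0)
    (hΔpos : ∀ j, 1 ≤ j → j < n → 0 < Δ j) (a : ℕ → ℕ) (ha : Feasible n C Δ a) :
    ∑ j ∈ Finset.Icc 1 n, (a j : ℝ) * Δ j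
      ≤ ∑ j ∈ Finset.Icc 1 n, (C / (Δ j) ^ 2 + 1) * Δ j := by
  apply Finset.sum_le_sum
  intro j hj
  simp only [Finset.mem_Icc] at hj
  rcases eq_or_lt_of_le hj.2 with h | h
  · subst h; simp [hΔn]
  · have hΔ := hΔpos j hj.1 h
    have h2 : (0:ℝ) < (Δ j) ^ 2 := by positivity
    have h3 : (0:ℝ) < C / (Δ j) ^ 2 := div_pos hC h2
    rcases Nat.eq_zero_or_pos (a j) with h0 | h0
    · rw [h0]
      push_cast
      rw [zero_mul]
      nlinarith
    · have h1 : (a j : ℝ) ≤ ∑ i ∈ Finset.Icc 1 j, (a i : ℝ) :=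
        Finset.single_le_sum (f := fun i => ((a i : ℝ))) (fun i _ => Nat.cast_nonneg _)
          (Finset.mem_Icc.mpr ⟨hj.1, le_refl j⟩)
      exact mul_le_mul_of_nonneg_right (h1.trans (ha j hj.1 h h0)) hΔ.le

/-- **Exchange step preserves feasibility and objective.** Let `n ≥ 2`, `C > 0`, and
`Δ` with `Δ_n = 0`, `Δ_j > 0` for `j < n`.  Suppose `Δ_{j0} < Δ_{j0+1}` for some
`1 ≤ j0 ≤ n - 2`, and let `Δ̄` be `Δ` with the entries at `j0` and `j0 + 1` swapped.
Then for every feasible `x` for `Δ`, the tuple `x̄` obtained by swapping `x_{j0}` and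
`x_{j0+1}` is feasible for `Δ̄` and has the same objective value; consequently the
optimal value for `Δ` is at most the optimal value for `Δ̄`. -/
theorem exchange_step
    (n : ℕ) (hn : 2 ≤ n) (C : ℝ) (hC : 0 < C)
    (Δ : ℕ → ℝ) (hΔn : Δ n = 0) (hΔpos : ∀ j, 1 ≤ j → j < n → 0 < Δ j)
    (j0 : ℕ) (hj0 : 1 ≤ j0) (hj0' : j0 ≤ n - 2) (hswap : Δ j0 < Δ (j0 + 1))
    (Δbar : ℕ → ℝ)
    (hΔbar : Δbar = fun j =>
      if j = j0 then Δ (j0 + 1) else if j = j0 + 1 then Δ j0 else Δ j) :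
    (∀ x : ℕ → ℕ, Feasible n C Δ x →
      Feasible n C Δbar
        (fun j => if j = j0 then x (j0 + 1) else if j = j0 + 1 then x j0 else x j) ∧
      (∑ j ∈ Finset.Icc 1 n,
          (((if j = j0 then x (j0 + 1) else if j = j0 + 1 then x j0 else x j) : ℕ) : ℝ)
            * Δbar j)
        = ∑ j ∈ Finset.Icc 1 n, (x j : ℝ) * Δ j) ∧
    OptVal n C Δ ≤ OptVal n C Δbar := by
  have hj1n : j0 + 1 < n := by omega
  have hj0n : j0 < n := by omega
  have hΔ0 := hΔpos j0 hj0 hj0n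
  have hΔ1 := hΔpos (j0 + 1) (by omega) hj1n
  subst hΔbar
  have hbar_n : (fun j => if j = j0 then Δ (j0 + 1) else if j = j0 + 1 then Δ j0 else Δ j) n
      = 0 := by
    simp only
    rw [if_neg (by omega), if_neg (by omega)]
    exact hΔn
  have hbar_pos : ∀ j, 1 ≤ j → j < n →
      0 < (fun j => if j = j0 then Δ (j0 + 1) else if j = j0 + 1 then Δ j0 else Δ j) j := by
    intro j h1 h2
    simp only
    split_ifs with ha hb
    · exact hΔ1
    · exact hΔ0
    · exact hΔpos j h1 h2
  have main : ∀ x : ℕ → ℕ, Feasible n C Δ x →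
      Feasible n C (fun j => if j = j0 then Δ (j0 + 1) else if j = j0 + 1 then Δ j0 else Δ j)
        (fun j => if j = j0 then x (j0 + 1) else if j = j0 + 1 then x j0 else x j) ∧
      (∑ j ∈ Finset.Icc 1 n,
          (((if j = j0 then x (j0 + 1) else if j = j0 + 1 then x j0 else x j) : ℕ) : ℝ)
            * (if j = j0 then Δ (j0 + 1) else if j = j0 + 1 then Δ j0 else Δ j))
        = ∑ j ∈ Finset.Icc 1 n, (x j : ℝ) * Δ j := by
    intro x hx
    have cast_eq : ∀ i, (((if i = j0 then x (j0 + 1) else if i = j0 + 1 then x j0 else x i) : ℕ) : ℝ)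
        = (if i = j0 then (x (j0+1) : ℝ) else if i = j0+1 then (x j0 : ℝ) else (x i : ℝ)) := by
      intro i; split_ifs <;> rfl
    constructor
    · intro j h1 hjn hpos
      simp only at hpos ⊢
      simp only [cast_eq]
      by_cases hje : j = j0
      · rw [hje] at hpos ⊢
        rw [if_pos rfl] at hpos ⊢
        have hsub : ∑ i ∈ Finset.Icc 1 j0,
            (if i = j0 then (x (j0+1) : ℝ) else if i = j0+1 then (x j0 : ℝ) else (x i : ℝ))
            ≤ ∑ i ∈ Finset.Icc 1 (j0+1),
            (if i = j0 then (x (j0+1) : ℝ) else if i = j0+1 then (x j0 : ℝ) else (x i : ℝ)) := by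
          apply Finset.sum_le_sum_of_subset_of_nonneg
          · exact Finset.Icc_subset_Icc le_rfl (by omega)
          · intro i _ _; split_ifs <;> positivity
        rw [sum_swap_eq j0 (j0+1) hj0 le_rfl (fun i => (x i : ℝ))] at hsub
        exact hsub.trans (hx (j0+1) (by omega) hj1n hpos)
      · rw [if_neg hje] at hpos ⊢
        by_cases hje' : j = j0 + 1
        · rw [hje'] at hpos ⊢
          rw [if_pos rfl] at hpos ⊢
          rw [sum_swap_eq j0 (j0+1) hj0 le_rfl (fun i => (x i : ℝ))]
          by_cases h01 : 0 < x (j0+1)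
          · have := hx (j0+1) (by omega) hj1n h01
            have hle : C / (Δ (j0+1)) ^ 2 ≤ C / (Δ j0) ^ 2 := by
              apply div_le_div_of_nonneg_left hC.le (by positivity)
              nlinarith
            linarith
          · have h0 : x (j0+1) = 0 := by omega
            have := hx j0 hj0 hj0n hpos
            rw [Finset.sum_Icc_succ_top (by omega : 1 ≤ j0 + 1)]
            rw [h0]
            push_cast
            linarith
        · rw [if_neg hje'] at hpos ⊢
          have hsum : ∑ i ∈ Finset.Icc 1 j,
              (if i = j0 then (x (j0+1) : ℝ) else if i = j0+1 then (x j0 : ℝ) else (x i : ℝ))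
              = ∑ i ∈ Finset.Icc 1 j, (x i : ℝ) := by
            by_cases hj' : j0 + 1 ≤ j
            · exact sum_swap_eq j0 j hj0 hj' _
            · apply Finset.sum_congr rfl
              intro i hi
              simp only [Finset.mem_Icc] at hi
              rw [if_neg (by omega), if_neg (by omega)]
          rw [hsum]
          exact hx j h1 hjn hpos
    · rw [Finset.sum_congr rfl (fun i _ => by rw [cast_eq])]
      have : ∀ i, (if i = j0 then (x (j0+1) : ℝ) else if i = j0+1 then (x j0 : ℝ) else (x i : ℝ))
          * (if i = j0 then Δ (j0 + 1) else if i = j0 + 1 then Δ j0 else Δ i)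
          = (if i = j0 then (x (j0+1) : ℝ) * Δ (j0+1) else if i = j0+1 then (x j0 : ℝ) * Δ j0
              else (x i : ℝ) * Δ i) := by
        intro i; split_ifs <;> rfl
      rw [Finset.sum_congr rfl (fun i _ => this i)]
      exact sum_swap_eq j0 n hj0 (by omega) (fun i => (x i : ℝ) * Δ i)
  refine ⟨main, ?_⟩
  apply csSup_le_csSup
  · refine ⟨∑ j ∈ Finset.Icc 1 n,
      (C / ((if j = j0 then Δ (j0 + 1) else if j = j0 + 1 then Δ j0 else Δ j)) ^ 2 + 1)
        * (if j = j0 then Δ (j0 + 1) else if j = j0 + 1 then Δ j0 else Δ j), ?_⟩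
    rintro v ⟨a, ha, rfl⟩
    exact obj_bound n C hC _ hbar_n hbar_pos a ha
  · refine ⟨0, fun _ => 0, ?_, by simp⟩
    intro j _ _ h
    simp at h
  · rintro v ⟨a, ha, rfl⟩
    exact ⟨_, (main a ha).1, ((main a ha).2).symm⟩
end

section
/- Tightness of the Chernoff bound (existential form): there exist absolute constants c' > 0, d > 0 and p > 0 such that for every positive integer n and every real ε with 0 < ε < d and ε²·n > p, if X_1, …, X_n are i.i.d. Bernoulli random variables with Pr[X_1 = 1] = 1/2, then Pr{(1/n)·∑_{i=1}^n X_i > 1/2 + ε} > e^{−c'·n·ε²}. -/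
open MeasureTheory

/-- The Bernoulli measure on `Bool` with success probability `p` (for `p ∈ [0,1]`). -/
noncomputable def bern (p : ℝ) : Measure Bool :=
  (PMF.bernoulli (min (Real.toNNReal p) 1) (min_le_right _ _)).toMeasure

/-!
The event contains the window of success counts `⌊n/2⌋ + s, …, ⌊n/2⌋ + 2s` with `s ≈ nε`.
Climbing from the middle, consecutive binomial coefficients shrink by a factor at least
`1 - 8s/n ≥ exp (-16s/n)`, so every coefficient in the window is at least
`C(n, ⌊n/2⌋) · exp (-32s²/n)`, while `C(n, ⌊n/2⌋) ≳ 2ⁿ/√n` because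
`16ᵐ ≤ (4m+1) C(2m, m)²`. The window has `s + 1 ≳ √n` terms (this is where `ε²n > 2`
enters), so its probability is at least `exp (-32s²/n) / 2 ≥ exp (-128nε²) / 2`.
-/

open Finset Real

instance isProbabilityMeasure_bern (p : ℝ) : IsProbabilityMeasure (bern p) := by
  unfold bern; infer_instance

theorem bern_half_singleton (b : Bool) : bern (1 / 2) {b} = 2⁻¹ := by
  have hp : min (Real.toNNReal (1 / 2)) 1 = 2⁻¹ := by
    rw [one_div, Real.toNNReal_inv, Real.toNNReal_ofNat]
    exact min_eq_left (inv_le_one_of_one_le₀ one_le_two)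
  rw [bern, PMF.toMeasure_apply_singleton _ _ (measurableSet_singleton b), PMF.bernoulli,
    PMF.ofFintype_apply, hp]
  cases b
  · simp [ENNReal.one_sub_inv_two]
  · simp

section BoolVectors

variable {ι : Type*} [Fintype ι]

theorem card_filter_card_eq_true [DecidableEq ι] (l : ℕ) :
    #{ω : ι → Bool | #{i | ω i} = l} = (Fintype.card ι).choose l := by
  rw [← card_univ, ← card_powersetCard]
  refine card_nbij' (fun ω => ({i | ω i} : Finset ι)) (fun s i => i ∈ s) ?_ ?_ ?_ ?_ <;>
    intro x hx <;> simp_all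

theorem card_filter_card_mem [DecidableEq ι] (W : Finset ℕ) :
    #{ω : ι → Bool | #{i | ω i} ∈ W} = ∑ l ∈ W, (Fintype.card ι).choose l := by
  rw [card_eq_sum_card_fiberwise (f := fun ω => #{i | ω i}) (t := W)
    (fun ω hω => by simpa using hω)]
  refine sum_congr rfl fun l hl => ?_
  rw [← card_filter_card_eq_true, filter_filter]
  congr 1
  ext ω
  simp only [mem_filter, mem_univ, true_and]
  exact ⟨fun h => h.2, by rintro rfl; exact ⟨hl, rfl⟩⟩

theorem pi_bern_half_singleton (ω : ι → Bool) :
    Measure.pi (fun _ : ι => bern (1 / 2)) {ω} = 2⁻¹ ^ Fintype.card ι := by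
  rw [← Set.univ_pi_singleton ω, Measure.pi_pi]
  simp only [bern_half_singleton, prod_const, card_univ]

theorem pi_bern_half_apply_finset (F : Finset (ι → Bool)) :
    Measure.pi (fun _ : ι => bern (1 / 2)) F = #F * 2⁻¹ ^ Fintype.card ι := by
  rw [← sum_measure_singleton]
  simp only [pi_bern_half_singleton, sum_const, nsmul_eq_mul]

theorem pi_bern_half_real_card_mem [DecidableEq ι] (W : Finset ℕ) :
    (Measure.pi fun _ : ι => bern (1 / 2)).real {ω | #{i | ω i} ∈ W} =
      (∑ l ∈ W, ((Fintype.card ι).choose l : ℝ)) / 2 ^ Fintype.card ι := by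
  have h := pi_bern_half_apply_finset (ι := ι) {ω | #{i | ω i} ∈ W}
  rw [coe_filter, card_filter_card_mem] at h
  simp only [mem_univ, true_and] at h
  rw [measureReal_def, h, ENNReal.toReal_mul, ENNReal.toReal_pow, ENNReal.toReal_inv,
    ENNReal.toReal_ofNat, ENNReal.toReal_natCast]
  push_cast
  rw [div_eq_mul_inv, inv_pow]

end BoolVectors

theorem Nat.sixteen_pow_le_mul_centralBinom_sq (m : ℕ) :
    16 ^ m ≤ (4 * m + 1) * m.centralBinom ^ 2 := by
  induction m with
  | zero => simp
  | succ m ih =>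
    refine Nat.le_of_mul_le_mul_right (c := (m + 1) ^ 2) ?_ (by positivity)
    have hpoly : 16 * (4 * m + 1) * (m + 1) ^ 2 ≤ (4 * m + 5) * (2 * (2 * m + 1)) ^ 2 := by
      ring_nf; omega
    calc 16 ^ (m + 1) * (m + 1) ^ 2 = 16 ^ m * (16 * (m + 1) ^ 2) := by ring
      _ ≤ (4 * m + 1) * m.centralBinom ^ 2 * (16 * (m + 1) ^ 2) := Nat.mul_le_mul_right _ ih
      _ ≤ (4 * m + 5) * (2 * (2 * m + 1)) ^ 2 * m.centralBinom ^ 2 := by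
        nlinarith [Nat.mul_le_mul_right (m.centralBinom ^ 2) hpoly]
      _ = (4 * (m + 1) + 1) * (m + 1).centralBinom ^ 2 * (m + 1) ^ 2 := by
        rw [show (4 * (m + 1) + 1) * (m + 1).centralBinom ^ 2 * (m + 1) ^ 2
          = (4 * m + 5) * ((m + 1) * (m + 1).centralBinom) ^ 2 by ring,
          Nat.succ_mul_centralBinom_succ]
        ring

theorem Nat.four_pow_le_mul_choose_half_sq (n : ℕ) :
    4 ^ n ≤ 4 * (2 * n + 1) * n.choose (n / 2) ^ 2 := by
  have hpow : 4 ^ n ≤ 4 * 16 ^ (n / 2) := by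
    calc 4 ^ n ≤ 4 ^ (2 * (n / 2) + 1) := Nat.pow_le_pow_right (by norm_num) (by omega)
      _ = 4 * 16 ^ (n / 2) := by rw [pow_succ, pow_mul]; ring
  have hcentral : (n / 2).centralBinom ≤ n.choose (n / 2) := by
    rw [Nat.centralBinom_eq_two_mul_choose]
    exact Nat.choose_le_choose _ (Nat.mul_div_le n 2)
  calc 4 ^ n ≤ 4 * ((4 * (n / 2) + 1) * (n / 2).centralBinom ^ 2) :=
        hpow.trans (Nat.mul_le_mul_left _ (Nat.sixteen_pow_le_mul_centralBinom_sq _))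
    _ ≤ 4 * ((2 * n + 1) * n.choose (n / 2) ^ 2) :=
      Nat.mul_le_mul_left _ (Nat.mul_le_mul (by omega) (Nat.pow_le_pow_left hcentral 2))
    _ = 4 * (2 * n + 1) * n.choose (n / 2) ^ 2 := by ring

theorem Nat.two_pow_le_mul_choose_half {n t : ℕ} (ht : 2 * n + 1 ≤ t ^ 2) :
    2 ^ n ≤ 2 * t * n.choose (n / 2) := by
  refine (Nat.pow_le_pow_iff_left two_ne_zero).1 ?_
  calc (2 ^ n) ^ 2 = 4 ^ n := by rw [← pow_mul, mul_comm, pow_mul]; norm_num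
    _ ≤ 4 * (2 * n + 1) * n.choose (n / 2) ^ 2 := Nat.four_pow_le_mul_choose_half_sq n
    _ ≤ 4 * t ^ 2 * n.choose (n / 2) ^ 2 := by gcongr
    _ = (2 * t * n.choose (n / 2)) ^ 2 := by ring

theorem mul_choose_le_choose_succ {n l : ℕ} {q : ℝ} (hl : l < n)
    (hql : q * (l + 1) ≤ n - l) : q * n.choose l ≤ n.choose (l + 1) := by
  have hrec : (n.choose (l + 1) : ℝ) * (l + 1) = n.choose l * (n - l) := by
    have h := congrArg (Nat.cast (R := ℝ)) (Nat.choose_succ_right_eq n l)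
    push_cast [Nat.cast_sub hl.le] at h
    exact h
  refine le_of_mul_le_mul_right ?_ (by positivity : (0 : ℝ) < l + 1)
  calc q * n.choose l * (l + 1) = n.choose l * (q * (l + 1)) := by ring
    _ ≤ n.choose l * (n - l) := mul_le_mul_of_nonneg_left hql (Nat.cast_nonneg _)
    _ = n.choose (l + 1) * (l + 1) := hrec.symm

theorem exp_neg_two_mul_le_one_sub {x : ℝ} (hx₀ : 0 ≤ x) (hx : x ≤ 1 / 2) :
    exp (-2 * x) ≤ 1 - x := by
  have hinv : exp (-2 * x) * exp (2 * x) = 1 := by rw [← exp_add]; simp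
  nlinarith [add_one_le_exp (2 * x), exp_pos (-2 * x)]

theorem choose_half_mul_pow_le_choose_half_add {n s j : ℕ} (hs : 16 * s ≤ n)
    (hj : j ≤ 2 * s) :
    (n.choose (n / 2) : ℝ) * (1 - 8 * s / n) ^ j ≤ n.choose (n / 2 + j) := by
  induction j with
  | zero => simp
  | succ j ih =>
    have hn : (0 : ℝ) < n := by exact_mod_cast (show 0 < n by omega)
    have hsn : (16 * s : ℝ) ≤ n := by exact_mod_cast hs
    have hq : (0 : ℝ) ≤ 1 - 8 * s / n := by rw [sub_nonneg, div_le_one hn]; linarith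
    have hl : ((n / 2 + j : ℕ) : ℝ) + 1 ≤ n / 2 + 2 * s := by
      have : (((n / 2 : ℕ) : ℝ)) ≤ n / 2 := Nat.cast_div_le
      have : (j : ℝ) + 1 ≤ 2 * s := by exact_mod_cast hj
      push_cast; linarith
    have hstep : (1 - 8 * s / n : ℝ) * n.choose (n / 2 + j) ≤ n.choose (n / 2 + j + 1) := by
      refine mul_choose_le_choose_succ (by omega) ?_
      calc (1 - 8 * s / n) * (((n / 2 + j : ℕ) : ℝ) + 1)
          ≤ (1 - 8 * s / n) * (n / 2 + 2 * s) := mul_le_mul_of_nonneg_left hl hq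
        _ = n / 2 - 2 * s - 16 * s ^ 2 / n := by field_simp; ring
        _ ≤ n - (n / 2 + j : ℕ) := by
          have : 0 ≤ 16 * (s : ℝ) ^ 2 / n := by positivity
          linarith
    calc (n.choose (n / 2) : ℝ) * (1 - 8 * s / n) ^ (j + 1)
        = (1 - 8 * s / n) * (n.choose (n / 2) * (1 - 8 * s / n) ^ j) := by ring
      _ ≤ (1 - 8 * s / n) * n.choose (n / 2 + j) :=
        mul_le_mul_of_nonneg_left (ih (by omega)) hq
      _ ≤ n.choose (n / 2 + (j + 1)) := hstep

theorem exp_neg_le_one_sub_pow {n s : ℕ} (hs : 16 * s ≤ n) :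
    exp (-(32 * s ^ 2 / n)) ≤ (1 - 8 * s / n : ℝ) ^ (2 * s) := by
  rcases Nat.eq_zero_or_pos s with rfl | hs₀
  · simp
  have hn : (0 : ℝ) < n := by exact_mod_cast (show 0 < n by omega)
  have hsn : (16 * s : ℝ) ≤ n := by exact_mod_cast hs
  have hx : 8 * s / n ≤ (1 / 2 : ℝ) := by rw [div_le_iff₀ hn]; linarith
  calc exp (-(32 * s ^ 2 / n)) = exp (-2 * (8 * s / n)) ^ (2 * s) := by
        rw [← exp_nat_mul]; congr 1; push_cast; ring
    _ ≤ (1 - 8 * s / n) ^ (2 * s) :=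
        pow_le_pow_left₀ (exp_nonneg _) (exp_neg_two_mul_le_one_sub (by positivity) hx) _

theorem mul_choose_half_mul_exp_le_sum_choose {n s : ℕ} (hs : 16 * s ≤ n) :
    (s + 1) * (n.choose (n / 2) : ℝ) * exp (-(32 * s ^ 2 / n)) ≤
      ∑ l ∈ Icc (n / 2 + s) (n / 2 + 2 * s), (n.choose l : ℝ) := by
  have hn : (0 : ℝ) ≤ n := Nat.cast_nonneg n
  have hsn : (16 * s : ℝ) ≤ n := by exact_mod_cast hs
  have hq₀ : (0 : ℝ) ≤ 1 - 8 * s / n := by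
    rcases hn.eq_or_lt with hn | hn
    · simp [← hn]
    · rw [sub_nonneg, div_le_one hn]; linarith
  have hq₁ : 1 - 8 * s / n ≤ (1 : ℝ) := by simp only [sub_le_self_iff]; positivity
  have hterm : ∀ l ∈ Icc (n / 2 + s) (n / 2 + 2 * s),
      (n.choose (n / 2) : ℝ) * exp (-(32 * s ^ 2 / n)) ≤ n.choose l := by
    intro l hl
    obtain ⟨j, rfl⟩ : ∃ j, l = n / 2 + j := ⟨l - n / 2, by grind⟩
    have hj : j ≤ 2 * s := by grind
    calc (n.choose (n / 2) : ℝ) * exp (-(32 * s ^ 2 / n))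
        ≤ n.choose (n / 2) * (1 - 8 * s / n) ^ (2 * s) := by
          gcongr; exact exp_neg_le_one_sub_pow hs
      _ ≤ n.choose (n / 2) * (1 - 8 * s / n) ^ j :=
        mul_le_mul_of_nonneg_left (pow_le_pow_of_le_one hq₀ hq₁ hj) (Nat.cast_nonneg _)
      _ ≤ n.choose (n / 2 + j) := choose_half_mul_pow_le_choose_half_add hs hj
  have hcard : #(Icc (n / 2 + s) (n / 2 + 2 * s)) = s + 1 := by simp only [Nat.card_Icc]; omega
  have hsum := card_nsmul_le_sum _ _ _ hterm
  rw [hcard, nsmul_eq_mul] at hsum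
  push_cast at hsum
  linarith

theorem exp_div_two_le_sum_choose_div_two_pow {n s : ℕ} (hs : 16 * s ≤ n)
    (hsn : 2 * n + 1 ≤ (s + 1) ^ 2) :
    exp (-(32 * s ^ 2 / n)) / 2 ≤
      (∑ l ∈ Icc (n / 2 + s) (n / 2 + 2 * s), (n.choose l : ℝ)) / 2 ^ n := by
  have hcentral : (2 : ℝ) ^ n ≤ 2 * (s + 1) * n.choose (n / 2) := by
    exact_mod_cast Nat.two_pow_le_mul_choose_half hsn
  rw [le_div_iff₀ (by positivity)]
  calc exp (-(32 * s ^ 2 / n)) / 2 * 2 ^ n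
      ≤ exp (-(32 * s ^ 2 / n)) / 2 * (2 * (s + 1) * n.choose (n / 2)) := by gcongr
    _ = (s + 1) * n.choose (n / 2) * exp (-(32 * s ^ 2 / n)) := by ring
    _ ≤ _ := mul_choose_half_mul_exp_le_sum_choose hs

theorem exists_exp_lt_sum_choose_div_two_pow {n : ℕ} {ε : ℝ} (hε : 0 < ε) (hεd : ε < 1 / 32)
    (hn : 2 < ε ^ 2 * n) :
    ∃ s : ℕ, n * ε + 1 ≤ s ∧ exp (-(129 * n * ε ^ 2)) <
      (∑ l ∈ Icc (n / 2 + s) (n / 2 + 2 * s), (n.choose l : ℝ)) / 2 ^ n := by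
  have hnε : 64 < n * ε := by nlinarith
  have hn₀ : (0 : ℝ) < n := by nlinarith
  obtain ⟨s, hs_lb, hs_ub⟩ : ∃ s : ℕ, n * ε + 1 ≤ s ∧ (s : ℝ) ≤ n * ε + 2 :=
    ⟨⌈n * ε⌉₊ + 1, by push_cast; linarith [Nat.le_ceil (n * ε)],
      by push_cast; linarith [Nat.ceil_lt_add_one (by positivity : 0 ≤ n * ε)]⟩
  refine ⟨s, hs_lb, ?_⟩
  have hs : 16 * s ≤ n := by
    suffices (16 * s : ℝ) ≤ n by exact_mod_cast this
    nlinarith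
  have hsn : 2 * n + 1 ≤ (s + 1) ^ 2 := by
    suffices (2 * n + 1 : ℝ) ≤ (s + 1) ^ 2 by exact_mod_cast this
    nlinarith
  refine lt_of_lt_of_le ?_ (exp_div_two_le_sum_choose_div_two_pow hs hsn)
  have hexponent : 32 * (s : ℝ) ^ 2 / n ≤ 128 * n * ε ^ 2 := by
    rw [div_le_iff₀ hn₀]; nlinarith
  have hhalf : exp (-(n * ε ^ 2)) < 1 / 2 := by
    rw [exp_neg, inv_lt_comm₀ (exp_pos _) (by norm_num)]
    linarith [add_one_lt_exp (show (n : ℝ) * ε ^ 2 ≠ 0 by positivity)]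
  calc exp (-(129 * n * ε ^ 2)) = exp (-(n * ε ^ 2)) * exp (-(128 * n * ε ^ 2)) := by
        rw [← exp_add]; ring_nf
    _ < 1 / 2 * exp (-(128 * n * ε ^ 2)) := by gcongr
    _ ≤ exp (-(32 * s ^ 2 / n)) / 2 := by
        rw [one_div_mul_eq_div]; gcongr

/-- **Tightness of the Chernoff bound.** There are absolute constants `c', d, p > 0`
such that for every `n ≥ 1` and `0 < ε < d` with `ε² n > p`, if `X_1, …, X_n` are
i.i.d. Bernoulli(1/2) random variables then
`Pr{(1/n) ∑ X_i > 1/2 + ε} > e^{-c' n ε²}`. -/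
theorem chernoff_tightness :
    ∃ c' > (0 : ℝ), ∃ d > (0 : ℝ), ∃ p > (0 : ℝ),
      ∀ n : ℕ, 0 < n → ∀ ε : ℝ, 0 < ε → ε < d → p < ε ^ 2 * n →
        ENNReal.ofReal (Real.exp (-(c' * n * ε ^ 2))) <
          (Measure.pi fun _ : Fin n => bern (1 / 2))
            {ω | 1 / 2 + ε < (∑ i, if ω i then (1 : ℝ) else 0) / n} := by
  refine ⟨129, by norm_num, 1 / 32, by norm_num, 2, by norm_num, fun n hn ε hε hεd hp => ?_⟩
  obtain ⟨s, hs, htail⟩ := exists_exp_lt_sum_choose_div_two_pow hε hεd hp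
  set W := Icc (n / 2 + s) (n / 2 + 2 * s)
  have hevent : {ω : Fin n → Bool | #{i | ω i} ∈ W} ⊆
      {ω | 1 / 2 + ε < (∑ i, if ω i then (1 : ℝ) else 0) / n} := by
    intro ω hω
    have hn_le : (n : ℝ) ≤ 2 * (n / 2 : ℕ) + 1 := by
      exact_mod_cast (by omega : n ≤ 2 * (n / 2) + 1)
    have hcount : ((n / 2 + s : ℕ) : ℝ) ≤ #{i | ω i} := by exact_mod_cast (mem_Icc.1 hω).1
    rw [Set.mem_ofPred_eq, sum_boole, lt_div_iff₀ (by exact_mod_cast hn)]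
    push_cast at hcount
    linarith
  calc ENNReal.ofReal (exp (-(129 * n * ε ^ 2)))
      < ENNReal.ofReal
          ((Measure.pi fun _ : Fin n => bern (1 / 2)).real {ω | #{i | ω i} ∈ W}) := by
        rw [pi_bern_half_real_card_mem, Fintype.card_fin]
        exact (ENNReal.ofReal_lt_ofReal_iff_of_nonneg (exp_nonneg _)).2 htail
    _ = (Measure.pi fun _ : Fin n => bern (1 / 2)) {ω | #{i | ω i} ∈ W} := ofReal_measureReal
    _ ≤ _ := measure_mono hevent
end

section
/- Analytic inequality used in the reverse Chernoff proof: for every real δ with 0 ≤ δ < 1, (1 − δ)·(1 + δ)^{2/(1−δ) − 1} ≤ e^{2δ²/(1−δ)}. -/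
/-- **Analytic inequality used in the reverse Chernoff proof.** For every real
`0 ≤ δ < 1`, `(1 - δ) (1 + δ)^{2/(1-δ) - 1} ≤ e^{2δ²/(1-δ)}`. -/
theorem analytic_inequality (δ : ℝ) (h0 : 0 ≤ δ) (h1 : δ < 1) :
    (1 - δ) * (1 + δ) ^ (2 / (1 - δ) - 1) ≤ Real.exp (2 * δ ^ 2 / (1 - δ)) := by
  have hd : (0:ℝ) < 1 - δ := by linarith
  have he : 0 ≤ 2 / (1 - δ) - 1 := by
    rw [sub_nonneg, le_div_iff₀ hd]; linarith
  have h1d : (1:ℝ) - δ ≤ Real.exp (-δ) := by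
    have := Real.add_one_le_exp (-δ); linarith
  have h2 : (1 + δ) ^ (2 / (1 - δ) - 1) ≤ Real.exp δ ^ (2 / (1 - δ) - 1) := by
    apply Real.rpow_le_rpow (by linarith)
    · have := Real.add_one_le_exp δ; linarith
    · exact he
  have h3 : Real.exp δ ^ (2 / (1 - δ) - 1) = Real.exp (δ * (2 / (1 - δ) - 1)) := by
    rw [← Real.exp_log (Real.exp_pos δ), ← Real.exp_mul, Real.log_exp]
  calc (1 - δ) * (1 + δ) ^ (2 / (1 - δ) - 1)
      ≤ Real.exp (-δ) * Real.exp (δ * (2 / (1 - δ) - 1)) := by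
        rw [← h3]
        exact mul_le_mul h1d h2 (Real.rpow_nonneg (by linarith) _) (Real.exp_pos _).le
    _ = Real.exp (2 * δ ^ 2 / (1 - δ)) := by
        rw [← Real.exp_add]
        congr 1
        field_simp
        ring
end

section
/- Polynomial-versus-exponential inequality used in the reverse Chernoff proof: for every real ε with 0 < ε ≤ 1/2, every positive integer n with ε²·n > 6, and every real l₀ with 1 ≤ l₀ ≤ n/2, one has (ε·n/2 − 1)·(1/(e·√(2π·l₀))) ≥ e^{−ε²·n/2}. -/
/-!
Put `x = ε²n/2 > 3`. Since `l₀ ≤ n/2`, `ε √(2π l₀) ≤ √(2π x) ≤ π x + 1/2`, while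
`ε (ε n/2 - 1) = x - ε ≥ x - 1/2`. Multiplying the claim by `ε e^x` thus reduces it to
`e (π x + 1/2) ≤ e^x (x - 1/2)` for `x ≥ 3`, which follows from `e^{x-1} ≥ ((x + 2)/3)³`
and a polynomial inequality.
-/

open Real

lemma sqrt_le_add_one_div_two {a : ℝ} (ha : 0 ≤ a) : √a ≤ (a + 1) / 2 :=
  Real.sqrt_le_iff.2 ⟨by positivity, by nlinarith [sq_nonneg (a - 1)]⟩

lemma add_two_div_three_pow_three_le_exp_sub_one {x : ℝ} (hx : -2 ≤ x) :
    ((x + 2) / 3) ^ 3 ≤ exp (x - 1) := by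
  convert one_sub_div_pow_le_exp_neg (n := 3) (t := 1 - x) (by push_cast; linarith) using 1
  · ring
  · rw [neg_sub]

lemma pi_mul_add_half_le_exp_sub_one_mul {x : ℝ} (hx : 3 ≤ x) :
    π * x + 1 / 2 ≤ exp (x - 1) * (x - 1 / 2) :=
  calc π * x + 1 / 2 ≤ ((x + 2) / 3) ^ 3 * (x - 1 / 2) := by
        nlinarith [pi_lt_d2, sq_nonneg (x - 3), mul_nonneg (sub_nonneg.2 hx) (sub_nonneg.2 hx)]
    _ ≤ exp (x - 1) * (x - 1 / 2) := by
        gcongr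
        · linarith
        · exact add_two_div_three_pow_three_le_exp_sub_one (by linarith)

lemma exp_one_mul_sqrt_two_pi_mul_le {x : ℝ} (hx : 3 ≤ x) :
    exp 1 * √(2 * π * x) ≤ exp x * (x - 1 / 2) :=
  calc exp 1 * √(2 * π * x) ≤ exp 1 * (π * x + 1 / 2) := by
        gcongr
        exact (sqrt_le_add_one_div_two (by positivity)).trans_eq (by ring)
    _ ≤ exp 1 * (exp (x - 1) * (x - 1 / 2)) := by
        gcongr
        exact pi_mul_add_half_le_exp_sub_one_mul hx
    _ = exp x * (x - 1 / 2) := by rw [← mul_assoc, ← exp_add, add_sub_cancel]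

theorem poly_vs_exp_inequality_general
    (ε : ℝ) (hε : 0 < ε) (hε2 : ε ≤ 1 / 2)
    (n : ℕ) (h6 : 6 < ε ^ 2 * n)
    (l₀ : ℝ) (hl1 : 1 ≤ l₀) (hl2 : l₀ ≤ n / 2) :
    Real.exp (-(ε ^ 2 * n / 2))
      ≤ (ε * n / 2 - 1) * (1 / (Real.exp 1 * Real.sqrt (2 * Real.pi * l₀))) := by
  set x := ε ^ 2 * n / 2 with hx
  have hsqrt : ε * √(2 * π * l₀) ≤ √(2 * π * x) := by
    rw [← sqrt_sq hε.le, ← sqrt_mul (sq_nonneg ε)]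
    refine sqrt_le_sqrt ?_
    calc ε ^ 2 * (2 * π * l₀) ≤ ε ^ 2 * (2 * π * (n / 2)) := by gcongr
      _ = 2 * π * x := by rw [hx]; ring
  rw [mul_one_div, le_div_iff₀ (by positivity), ← mul_le_mul_iff_right₀ hε]
  calc ε * (exp (-x) * (exp 1 * √(2 * π * l₀)))
      = exp (-x) * (exp 1 * (ε * √(2 * π * l₀))) := by ring
    _ ≤ exp (-x) * (exp 1 * √(2 * π * x)) := by gcongr
    _ ≤ exp (-x) * (exp x * (x - 1 / 2)) :=
        mul_le_mul_of_nonneg_left (exp_one_mul_sqrt_two_pi_mul_le (by linarith)) (exp_pos _).le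
    _ = x - 1 / 2 := by rw [← mul_assoc, ← exp_add, neg_add_cancel, exp_zero, one_mul]
    _ ≤ ε * (ε * n / 2 - 1) := by linarith

/-- **Polynomial-versus-exponential inequality used in the reverse Chernoff proof.**
For every `0 < ε ≤ 1/2`, every `n ≥ 1` with `ε² n > 6`, and every real `1 ≤ l₀ ≤ n/2`,
`(ε n / 2 - 1) · (1/(e √(2π l₀))) ≥ e^{-ε² n / 2}`. -/
theorem poly_vs_exp_inequality
    (ε : ℝ) (hε : 0 < ε) (hε2 : ε ≤ 1 / 2)
    (n : ℕ) (hn : 0 < n) (h6 : 6 < ε ^ 2 * n)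
    (l₀ : ℝ) (hl1 : 1 ≤ l₀) (hl2 : l₀ ≤ n / 2) :
    Real.exp (-(ε ^ 2 * n / 2))
      ≤ (ε * n / 2 - 1) * (1 / (Real.exp 1 * Real.sqrt (2 * Real.pi * l₀))) :=
  poly_vs_exp_inequality_general ε hε hε2 n h6 l₀ hl1 hl2
end
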